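/- arXiv:1703.10993 — 9 statements merged into one kernel-verified Lean document; each statement's English description precedes it below -/
import Mathlib

section
/- Let f : ℝ^p → ℝ be lower semicontinuous and ρ ≥ 0. Then f is ρ-weakly convex if and only if its subdifferential is ρ-hypomonotone: for all x, y ∈ ℝ^p, every v ∈ ∂f(x), and every w ∈ ∂f(y), one has ⟨v − w, x − y⟩ ≥ −ρ‖x − y‖². -/
open Filter Topology Metric Set

/-- `v` is a Fréchet subgradient of `g` at `x`:
`liminf_{y → x, y ≠ x} (g y - g x - ⟨v, y - x⟩)/‖y - x‖ ≥ 0`. -/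
def FSubgradAt {p : ℕ} (g : EuclideanSpace ℝ (Fin p) → ℝ)
    (v x : EuclideanSpace ℝ (Fin p)) : Prop :=
  0 ≤ Filter.liminf (fun y => (g y - g x - (inner ℝ v (y - x) : ℝ)) / ‖y - x‖)
      (nhdsWithin x {x}ᶜ)

section WCAux

variable {p : ℕ}

/-- `v` is a proximal subgradient of `g` at `x`. -/
def ProxSubAt (g : EuclideanSpace ℝ (Fin p) → ℝ) (v x : EuclideanSpace ℝ (Fin p)) : Prop :=
  ∃ C : ℝ, 0 ≤ C ∧ ∃ ε : ℝ, 0 < ε ∧ ∀ y : EuclideanSpace ℝ (Fin p), ‖y - x‖ < ε →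
    g x + (inner ℝ v (y - x) : ℝ) - C * ‖y - x‖ ^ 2 ≤ g y

lemma ProxSubAt.fsubgradAt {g : EuclideanSpace ℝ (Fin p) → ℝ} {v x : EuclideanSpace ℝ (Fin p)}
    (hp : ProxSubAt g v x) : FSubgradAt g v x := by
  obtain ⟨C, hC, ε, hε, hineq⟩ := hp
  unfold FSubgradAt
  rw [Filter.liminf_eq]
  have key : ∀ δ : ℝ, 0 < δ →
      ∀ᶠ y in 𝓝[{x}ᶜ] x, -δ ≤ (g y - g x - (inner ℝ v (y - x) : ℝ)) / ‖y - x‖ := by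
    intro δ hδ
    have hC1 : (0:ℝ) < C + 1 := by linarith
    have hr : 0 < min ε (δ / (C + 1)) := lt_min hε (div_pos hδ hC1)
    have h1 : ∀ᶠ y in 𝓝 x, dist y x < min ε (δ / (C + 1)) :=
      Metric.eventually_nhds_iff.mpr ⟨_, hr, fun {_} hy => hy⟩
    have h2 : ∀ᶠ y in 𝓝[{x}ᶜ] x, dist y x < min ε (δ / (C + 1)) :=
      h1.filter_mono nhdsWithin_le_nhds
    filter_upwards [h2, eventually_mem_nhdsWithin] with y hy hyx
    have hne : y ≠ x := hyx
    have hn : 0 < ‖y - x‖ := by rwa [norm_sub_pos_iff]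
    rw [dist_eq_norm] at hy
    have hy1 : ‖y - x‖ < ε := lt_of_lt_of_le hy (min_le_left _ _)
    have hy2 : ‖y - x‖ * (C + 1) < δ := by
      rw [← lt_div_iff₀ hC1]; exact lt_of_lt_of_le hy (min_le_right _ _)
    have hnum := hineq y hy1
    rw [le_div_iff₀ hn]
    nlinarith [mul_le_mul_of_nonneg_right hy2.le hn.le, sq_nonneg ‖y - x‖]
  by_cases hbdd : BddAbove {a : ℝ | ∀ᶠ y in 𝓝[{x}ᶜ] x,
      a ≤ (g y - g x - (inner ℝ v (y - x) : ℝ)) / ‖y - x‖}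
  · show (0:ℝ) ≤ sSup {a : ℝ | ∀ᶠ y in 𝓝[{x}ᶜ] x,
      a ≤ (g y - g x - (inner ℝ v (y - x) : ℝ)) / ‖y - x‖}
    by_contra hneg
    push_neg at hneg
    have hmem := key (-(sSup {a : ℝ | ∀ᶠ y in 𝓝[{x}ᶜ] x,
      a ≤ (g y - g x - (inner ℝ v (y - x) : ℝ)) / ‖y - x‖}) / 2) (by linarith)
    have := le_csSup hbdd hmem
    linarith
  · show (0:ℝ) ≤ sSup {a : ℝ | ∀ᶠ y in 𝓝[{x}ᶜ] x,
      a ≤ (g y - g x - (inner ℝ v (y - x) : ℝ)) / ‖y - x‖}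
    rw [Real.sSup_of_not_bddAbove hbdd]

/-- Extreme value theorem for lower semicontinuous functions on compacts. -/
lemma lsc_exists_min {h : EuclideanSpace ℝ (Fin p) → ℝ} (hlsc : LowerSemicontinuous h)
    {s : Set (EuclideanSpace ℝ (Fin p))} (hs : IsCompact s) (hne : s.Nonempty) :
    ∃ z ∈ s, ∀ w ∈ s, h z ≤ h w := by
  classical
  by_contra hcon
  push_neg at hcon
  set U : EuclideanSpace ℝ (Fin p) → Set (EuclideanSpace ℝ (Fin p)) :=
    fun w => {z | w ∈ s ∧ h w < h z} with hU
  have hUopen : ∀ w, IsOpen (U w) := by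
    intro w
    by_cases hw : w ∈ s
    · have : U w = h ⁻¹' (Set.Ioi (h w)) := by ext z; simp [hU, hw]
      rw [this]
      exact hlsc.isOpen_preimage _
    · have : U w = ∅ := by ext z; simp [hU, hw]
      rw [this]; exact isOpen_empty
  have hcover : s ⊆ ⋃ w, U w := by
    intro z hz
    obtain ⟨w, hws, hwz⟩ := hcon z hz
    exact Set.mem_iUnion.mpr ⟨w, hws, hwz⟩
  obtain ⟨t, ht⟩ := hs.elim_finite_subcover U hUopen hcover
  have hne' : (t.filter (fun w => w ∈ s)).Nonempty := by
    obtain ⟨z0, hz0⟩ := hne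
    have := ht hz0
    rw [Set.mem_iUnion₂] at this
    obtain ⟨w, hwt, hws, _⟩ := this
    exact ⟨w, Finset.mem_filter.mpr ⟨hwt, hws⟩⟩
  obtain ⟨w0, hw0t', hw0min⟩ := (t.filter (fun w => w ∈ s)).exists_min_image h hne'
  have hw0s : w0 ∈ s := (Finset.mem_filter.mp hw0t').2
  have hmem := ht hw0s
  rw [Set.mem_iUnion₂] at hmem
  obtain ⟨w, hwt, hws, hlt⟩ := hmem
  exact absurd hlt (not_lt.mpr (hw0min w (Finset.mem_filter.mpr ⟨hwt, hws⟩)))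

/-- A minimizer of `h + (α/2)‖· - a‖²` over a set `B`, interior in the sense that a ball
around it stays in `B`, gives a proximal subgradient. -/
lemma prox_of_minOn {h : EuclideanSpace ℝ (Fin p) → ℝ} {B : Set (EuclideanSpace ℝ (Fin p))}
    {α : ℝ} (hα : 0 < α) {a z : EuclideanSpace ℝ (Fin p)}
    (hmin : ∀ w ∈ B, h z + α / 2 * ‖z - a‖ ^ 2 ≤ h w + α / 2 * ‖w - a‖ ^ 2)
    {ε : ℝ} (hε : 0 < ε) (hball : ∀ w, ‖w - z‖ < ε → w ∈ B) :
    ProxSubAt h (α • (a - z)) z := by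
  refine ⟨α / 2, by positivity, ε, hε, ?_⟩
  intro w hw
  have h1 := hmin w (hball w hw)
  have hexp : ‖w - a‖ ^ 2 = ‖w - z‖ ^ 2 + 2 * (inner ℝ (w - z) (z - a) : ℝ) + ‖z - a‖ ^ 2 := by
    have hid : w - a = (w - z) + (z - a) := by abel
    rw [hid, norm_add_sq_real]
  have hin : (inner ℝ (α • (a - z)) (w - z) : ℝ) = -(α * (inner ℝ (w - z) (z - a) : ℝ)) := by
    rw [real_inner_smul_left, show a - z = -(z - a) from by abel, inner_neg_left,
      real_inner_comm]
    ring
  rw [hin]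
  nlinarith [h1, hexp]

end WCAux

section WCMain
set_option maxHeartbeats 2000000

variable {p : ℕ}

/-- Key variational lemma: if every proximal subgradient `u` at any point `z`
points away from `x0` (i.e. `⟨u, z - x0⟩ ≥ 0`), then `x0` is a global minimum. -/
lemma global_min_of_prox_outward {h : EuclideanSpace ℝ (Fin p) → ℝ}
    (hlsc : LowerSemicontinuous h) (x0 : EuclideanSpace ℝ (Fin p))
    (H : ∀ z u, ProxSubAt h u z → 0 ≤ (inner ℝ u (z - x0) : ℝ))
    (yb : EuclideanSpace ℝ (Fin p)) : h x0 ≤ h yb := by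
  rcases eq_or_ne yb x0 with rfl | hne
  · exact le_refl _
  have hd : 0 < ‖yb - x0‖ := by rwa [norm_sub_pos_iff]
  set d := ‖yb - x0‖ with hddef
  set R := 2 * d + 2 with hRdef
  set B := Metric.closedBall x0 R with hBdef
  have hcomp : IsCompact B := isCompact_closedBall _ _
  have hx0B : x0 ∈ B := Metric.mem_closedBall_self (by positivity)
  have hybB : yb ∈ B := by
    rw [hBdef, Metric.mem_closedBall, dist_eq_norm]; rw [hRdef]; linarith
  obtain ⟨zm, hzmB, hzm⟩ := lsc_exists_min hlsc hcomp ⟨x0, hx0B⟩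
  set Q := h x0 - h zm with hQdef
  have hQ : 0 ≤ Q := sub_nonneg.2 (hzm x0 hx0B)
  have main : ∀ ε : ℝ, 0 < ε → h x0 ≤ h yb + ε := by
    intro ε hε
    have hev := hlsc x0 (h x0 - ε / 2) (by linarith)
    rw [Metric.eventually_nhds_iff] at hev
    obtain ⟨r1, hr1, hr⟩ := hev
    set r0 := min r1 1 with hr0def
    have hr0 : 0 < r0 := lt_min hr1 one_pos
    have hr0le : r0 ≤ r1 := min_le_left _ _
    set α := (2 * Q + 1) * (1 + 1 / r0 ^ 2) with hαdef
    have hs0 : (0:ℝ) ≤ 1 / r0 ^ 2 := by positivity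
    have hα : 0 < α := by
      apply mul_pos (by linarith) (by linarith)
    have hα1 : 2 * Q ≤ α := by nlinarith
    have hα2 : 2 * Q < α * r0 ^ 2 := by
      have hrr : α * r0 ^ 2 = (2 * Q + 1) * (r0 ^ 2 + 1) := by
        rw [hαdef]; field_simp
      nlinarith [sq_nonneg r0]
    have hmin : ∀ a : EuclideanSpace ℝ (Fin p), ∃ z, z ∈ B ∧
        ∀ w ∈ B, h z + α / 2 * ‖z - a‖ ^ 2 ≤ h w + α / 2 * ‖w - a‖ ^ 2 := by
      intro a
      have hcont : Continuous fun w : EuclideanSpace ℝ (Fin p) => α / 2 * ‖w - a‖ ^ 2 :=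
        continuous_const.mul (((continuous_id.sub continuous_const).norm).pow 2)
      obtain ⟨z, hz1, hz2⟩ := lsc_exists_min (hlsc.add hcont.lowerSemicontinuous) hcomp ⟨x0, hx0B⟩
      exact ⟨z, hz1, hz2⟩
    choose y hyB hymin using hmin
    set A : ℝ → EuclideanSpace ℝ (Fin p) := fun s => x0 + s • (yb - x0) with hAdef
    have hAsub : ∀ s : ℝ, A s - x0 = s • (yb - x0) := by
      intro s; show (x0 + s • (yb - x0)) - x0 = s • (yb - x0); module
    have hAnorm : ∀ s : ℝ, 0 ≤ s → ‖A s - x0‖ = s * d := by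
      intro s hs; rw [hAsub, norm_smul, Real.norm_eq_abs, abs_of_nonneg hs]
    have hAdiff : ∀ s t : ℝ, A t - A s = (t - s) • (yb - x0) := by
      intro s t
      show (x0 + t • (yb - x0)) - (x0 + s • (yb - x0)) = (t - s) • (yb - x0); module
    have hA0 : A 0 = x0 := by show x0 + (0:ℝ) • (yb - x0) = x0; module
    have hA1 : A 1 = yb := by show x0 + (1:ℝ) • (yb - x0) = yb; module
    have hAB : ∀ s : ℝ, 0 ≤ s → s ≤ 1 → A s ∈ B := by
      intro s h0 h1
      rw [hBdef, Metric.mem_closedBall, dist_eq_norm, hAnorm s h0, hRdef]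
      nlinarith [mul_le_mul_of_nonneg_right h1 hd.le]
    have heQ : ∀ s : ℝ, 0 ≤ s → s ≤ 1 →
        h (y (A s)) + α / 2 * ‖y (A s) - A s‖ ^ 2 ≤ h x0 + α / 2 * d ^ 2 := by
      intro s h0 h1
      have h1' := hymin (A s) x0 hx0B
      have hxAs : ‖x0 - A s‖ = s * d := by rw [norm_sub_rev, hAnorm s h0]
      have hsd : (s * d) ^ 2 ≤ d ^ 2 := by
        nlinarith [mul_le_mul_of_nonneg_right h1 hd.le, mul_nonneg h0 hd.le]
      have : α / 2 * ‖x0 - A s‖ ^ 2 ≤ α / 2 * d ^ 2 := by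
        rw [hxAs]
        exact mul_le_mul_of_nonneg_left hsd (by positivity)
      linarith
    have hyint : ∀ s : ℝ, 0 ≤ s → s ≤ 1 → ‖y (A s) - A s‖ ≤ d + 1 := by
      intro s h0 h1
      have h2 := heQ s h0 h1
      have h3 : h zm ≤ h (y (A s)) := hzm _ (hyB (A s))
      have k1 : α * ‖y (A s) - A s‖ ^ 2 ≤ α * (1 + d ^ 2) := by nlinarith
      have k2 : ‖y (A s) - A s‖ ^ 2 ≤ 1 + d ^ 2 := le_of_mul_le_mul_left k1 hα
      nlinarith [norm_nonneg (y (A s) - A s), hd.le, sq_nonneg (‖y (A s) - A s‖ - (d + 1))]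
    have hproxA : ∀ s : ℝ, 0 ≤ s → s ≤ 1 →
        ProxSubAt h (α • (A s - y (A s))) (y (A s)) := by
      intro s h0 h1
      apply prox_of_minOn hα (hymin (A s)) one_pos
      intro w hw
      have t1 : ‖w - x0‖ ≤ ‖w - y (A s)‖ + ‖y (A s) - A s‖ + ‖A s - x0‖ := by
        calc ‖w - x0‖ ≤ ‖w - A s‖ + ‖A s - x0‖ := norm_sub_le_norm_sub_add_norm_sub _ _ _
          _ ≤ (‖w - y (A s)‖ + ‖y (A s) - A s‖) + ‖A s - x0‖ := by
              have := norm_sub_le_norm_sub_add_norm_sub w (y (A s)) (A s)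
              linarith
      have t2 : ‖A s - x0‖ ≤ d := by
        rw [hAnorm s h0]
        nlinarith [mul_le_mul_of_nonneg_right h1 hd.le]
      rw [hBdef, Metric.mem_closedBall, dist_eq_norm, hRdef]
      have := hyint s h0 h1
      linarith
    have hmonoA : ∀ s : ℝ, 0 ≤ s → s ≤ 1 →
        0 ≤ (inner ℝ (A s - y (A s)) (y (A s) - x0) : ℝ) := by
      intro s h0 h1
      have := H _ _ (hproxA s h0 h1)
      rw [real_inner_smul_left] at this
      exact nonneg_of_mul_nonneg_right this hα
    have hstep : ∀ s t : ℝ, 0 ≤ s → s < t → t ≤ 1 →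
        (h (y (A s)) + α / 2 * ‖y (A s) - A s‖ ^ 2) - α / 2 * ((t - s) * d) ^ 2 ≤
          h (y (A t)) + α / 2 * ‖y (A t) - A t‖ ^ 2 := by
      intro s t hs hst ht1
      have ht0 : 0 < t := lt_of_le_of_lt hs hst
      have hzB : y (A t) ∈ B := hyB (A t)
      have h1 : h (y (A s)) + α / 2 * ‖y (A s) - A s‖ ^ 2 ≤
          h (y (A t)) + α / 2 * ‖y (A t) - A s‖ ^ 2 := hymin (A s) (y (A t)) hzB
      have hba : A t - A s = ((t - s) / t) • (A t - x0) := by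
        rw [hAdiff s t, hAsub t, smul_smul]
        congr 1
        field_simp
      have hkey : 0 ≤ (inner ℝ (A t - A s) (A t - y (A t)) : ℝ) := by
        rw [hba, real_inner_smul_left]
        apply mul_nonneg (div_nonneg (by linarith) ht0.le)
        have hsplit : (inner ℝ (A t - x0) (A t - y (A t)) : ℝ) =
            ‖A t - y (A t)‖ ^ 2 + (inner ℝ (y (A t) - x0) (A t - y (A t)) : ℝ) := by
          rw [show A t - x0 = (A t - y (A t)) + (y (A t) - x0) from by abel, inner_add_left,
            real_inner_self_eq_norm_sq]
        rw [hsplit]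
        have hm := hmonoA t ht0.le ht1
        have hcomm : (inner ℝ (y (A t) - x0) (A t - y (A t)) : ℝ) =
            (inner ℝ (A t - y (A t)) (y (A t) - x0) : ℝ) := real_inner_comm _ _
        rw [hcomm]
        nlinarith [sq_nonneg ‖A t - y (A t)‖]
      have hnormba : ‖A t - A s‖ = (t - s) * d := by
        rw [hAdiff s t, norm_smul, Real.norm_eq_abs, abs_of_pos (sub_pos.2 hst)]
      have hexp : ‖y (A t) - A s‖ ^ 2 =
          ‖y (A t) - A t‖ ^ 2 + 2 * (inner ℝ (y (A t) - A t) (A t - A s) : ℝ) +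
            ‖A t - A s‖ ^ 2 := by
        rw [show y (A t) - A s = (y (A t) - A t) + (A t - A s) from by abel, norm_add_sq_real]
      have hinner2 : (inner ℝ (y (A t) - A t) (A t - A s) : ℝ) ≤ 0 := by
        have : (inner ℝ (y (A t) - A t) (A t - A s) : ℝ) =
            -(inner ℝ (A t - A s) (A t - y (A t)) : ℝ) := by
          rw [show y (A t) - A t = -(A t - y (A t)) from by abel, inner_neg_left,
            real_inner_comm]
        rw [this]; linarith
      have hle : ‖y (A t) - A s‖ ^ 2 ≤ ‖y (A t) - A t‖ ^ 2 + ((t - s) * d) ^ 2 := by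
        rw [hexp, hnormba]; linarith
      have hmul := mul_le_mul_of_nonneg_left hle (le_of_lt (half_pos hα))
      linarith
    have hchain : ∀ K : ℕ, 0 < K → ∀ i : ℕ, i ≤ K →
        (h (y (A 0)) + α / 2 * ‖y (A 0) - A 0‖ ^ 2) - i * (α / 2 * (d / K) ^ 2) ≤
          h (y (A (i / K))) + α / 2 * ‖y (A (i / K)) - A (i / K)‖ ^ 2 := by
      intro K hK
      have hKpos : (0:ℝ) < K := by exact_mod_cast hK
      intro i
      induction i with
      | zero => intro _; norm_num
      | succ n ih =>
        intro hle
        have hn : n ≤ K := Nat.le_of_succ_le hle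
        have h1 := ih hn
        have hs0 : (0:ℝ) ≤ (n:ℝ) / K := by positivity
        have hst : (n:ℝ) / K < ((n:ℝ) + 1) / K := by
          rw [div_lt_div_iff₀ hKpos hKpos]
          nlinarith [hKpos]
        have ht1 : ((n:ℝ) + 1) / K ≤ 1 := by
          rw [div_le_one hKpos]; exact_mod_cast hle
        have h2 := hstep ((n:ℝ) / K) (((n:ℝ) + 1) / K) hs0 hst ht1
        have hdiff : ((n:ℝ) + 1) / K - (n:ℝ) / K = 1 / K := by ring
        rw [hdiff] at h2
        have hd2 : (1 / (K:ℝ) * d) ^ 2 = (d / K) ^ 2 := by ring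
        rw [hd2] at h2
        have hcast : ((n + 1 : ℕ) : ℝ) = (n : ℝ) + 1 := by push_cast; ring
        rw [hcast]
        linarith
    obtain ⟨K, hKgt⟩ := exists_nat_gt (max 1 (α / 2 * d ^ 2 / (ε / 2)))
    have hKR : (1:ℝ) < K := lt_of_le_of_lt (le_max_left _ _) hKgt
    have hK : 0 < K := by exact_mod_cast lt_trans zero_lt_one hKR
    have hKpos : (0:ℝ) < K := by exact_mod_cast hK
    have h1 := hchain K hK K (le_refl K)
    rw [div_self (ne_of_gt hKpos), hA1, hA0] at h1
    have h2 : h (y yb) + α / 2 * ‖y yb - yb‖ ^ 2 ≤ h yb := by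
      have := hymin yb yb hybB
      simpa using this
    have h3 : h x0 - ε / 2 < h (y x0) + α / 2 * ‖y x0 - x0‖ ^ 2 := by
      have ha' : h (y x0) + α / 2 * ‖y x0 - x0‖ ^ 2 ≤ h x0 := by
        have := hymin x0 x0 hx0B
        simpa using this
      have hb' : h zm ≤ h (y x0) := hzm _ (hyB x0)
      have hc' : α / 2 * ‖y x0 - x0‖ ^ 2 ≤ Q := by rw [hQdef]; linarith
      have hn2 : α * ‖y x0 - x0‖ ^ 2 < α * r0 ^ 2 := by linarith
      have hn3 : ‖y x0 - x0‖ ^ 2 < r0 ^ 2 := lt_of_mul_lt_mul_left hn2 hα.le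
      have hnorm : ‖y x0 - x0‖ < r0 := by
        nlinarith [norm_nonneg (y x0 - x0), hr0]
      have hval := hr (show dist (y x0) x0 < r1 from by
        rw [dist_eq_norm]; linarith)
      have : (0:ℝ) ≤ α / 2 * ‖y x0 - x0‖ ^ 2 := by positivity
      linarith
    have hpen : (K:ℝ) * (α / 2 * (d / K) ^ 2) < ε / 2 := by
      have hgt : α / 2 * d ^ 2 / (ε / 2) < K := lt_of_le_of_lt (le_max_right _ _) hKgt
      have heq : (K:ℝ) * (α / 2 * (d / K) ^ 2) = α / 2 * d ^ 2 / K := by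
        field_simp
      rw [heq]
      rw [div_lt_iff₀ hKpos]
      rw [div_lt_iff₀ (by linarith : (0:ℝ) < ε / 2)] at hgt
      nlinarith
    linarith
  by_contra hcon
  push_neg at hcon
  have := main ((h x0 - h yb) / 2) (by linarith)
  linarith

end WCMain

section WCSupport
set_option maxHeartbeats 2000000

variable {p : ℕ}

/-- If the proximal subdifferential is monotone, every proximal subgradient is a global
supporting slope. -/
lemma support_of_monotone {g : EuclideanSpace ℝ (Fin p) → ℝ} (hlsc : LowerSemicontinuous g)
    (hmono : ∀ x y v w, ProxSubAt g v x → ProxSubAt g w y →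
      0 ≤ (inner ℝ (v - w) (x - y) : ℝ))
    {x0 v0 : EuclideanSpace ℝ (Fin p)} (hv0 : ProxSubAt g v0 x0)
    (z : EuclideanSpace ℝ (Fin p)) :
    g x0 + (inner ℝ v0 (z - x0) : ℝ) ≤ g z := by
  set h : EuclideanSpace ℝ (Fin p) → ℝ := fun w => g w + -(inner ℝ v0 w : ℝ) with hhdef
  have hcont : Continuous fun w : EuclideanSpace ℝ (Fin p) => -(inner ℝ v0 w : ℝ) :=
    (continuous_const.inner continuous_id).neg
  have hhlsc : LowerSemicontinuous h := hlsc.add hcont.lowerSemicontinuous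
  have htrans : ∀ (zz u : EuclideanSpace ℝ (Fin p)), ProxSubAt h u zz →
      ProxSubAt g (u + v0) zz := by
    intro zz u hu
    obtain ⟨C, hC, ε, hε, hineq⟩ := hu
    refine ⟨C, hC, ε, hε, ?_⟩
    intro y hy
    have h1 := hineq y hy
    have e1 : (inner ℝ v0 y : ℝ) - (inner ℝ v0 zz : ℝ) = (inner ℝ v0 (y - zz) : ℝ) := by
      rw [inner_sub_right]
    have e2 : (inner ℝ (u + v0) (y - zz) : ℝ) =
        (inner ℝ u (y - zz) : ℝ) + (inner ℝ v0 (y - zz) : ℝ) := by rw [inner_add_left]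
    simp only [hhdef] at h1
    linarith
  have hkey : ∀ zz u, ProxSubAt h u zz → 0 ≤ (inner ℝ u (zz - x0) : ℝ) := by
    intro zz u hu
    have := hmono zz x0 (u + v0) v0 (htrans zz u hu) hv0
    rwa [add_sub_cancel_right] at this
  have := global_min_of_prox_outward hhlsc x0 hkey z
  simp only [hhdef] at this
  have e3 : (inner ℝ v0 (z - x0) : ℝ) = (inner ℝ v0 z : ℝ) - (inner ℝ v0 x0 : ℝ) := by
    rw [inner_sub_right]
  linarith

/-- Near any point there is a point with a proximal subgradient pointing back,
with function value close from below. -/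
lemma exists_prox_near {g : EuclideanSpace ℝ (Fin p) → ℝ} (hlsc : LowerSemicontinuous g)
    (c : EuclideanSpace ℝ (Fin p)) {ε : ℝ} (hε : 0 < ε) :
    ∃ z u, ProxSubAt g u z ∧ g c - ε < g z ∧ 0 ≤ (inner ℝ u (c - z) : ℝ) := by
  have hev := hlsc c (g c - ε) (by linarith)
  rw [Metric.eventually_nhds_iff] at hev
  obtain ⟨r1, hr1, hr⟩ := hev
  set r0 := min r1 1 with hr0def
  have hr0 : 0 < r0 := lt_min hr1 one_pos
  have hr0le : r0 ≤ r1 := min_le_left _ _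
  have hr01 : r0 ≤ 1 := min_le_right _ _
  set B := Metric.closedBall c 1 with hBdef
  have hcomp : IsCompact B := isCompact_closedBall _ _
  have hcB : c ∈ B := Metric.mem_closedBall_self zero_le_one
  obtain ⟨zm, hzmB, hzm⟩ := lsc_exists_min hlsc hcomp ⟨c, hcB⟩
  set Q := g c - g zm with hQdef
  have hQ : 0 ≤ Q := sub_nonneg.2 (hzm c hcB)
  set α := (2 * Q + 1) * (1 + 1 / r0 ^ 2) with hαdef
  have hs0 : (0:ℝ) ≤ 1 / r0 ^ 2 := by positivity
  have hα : 0 < α := mul_pos (by linarith) (by linarith)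
  have hα2 : 2 * Q < α * r0 ^ 2 := by
    have hrr : α * r0 ^ 2 = (2 * Q + 1) * (r0 ^ 2 + 1) := by
      rw [hαdef]; field_simp
    nlinarith [sq_nonneg r0]
  have hcont : Continuous fun w : EuclideanSpace ℝ (Fin p) => α / 2 * ‖w - c‖ ^ 2 :=
    continuous_const.mul (((continuous_id.sub continuous_const).norm).pow 2)
  obtain ⟨z, hzB, hzmin⟩ := lsc_exists_min (hlsc.add hcont.lowerSemicontinuous) hcomp ⟨c, hcB⟩
  have hval : g z + α / 2 * ‖z - c‖ ^ 2 ≤ g c := by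
    have := hzmin c hcB
    simpa using this
  have hkey : α / 2 * ‖z - c‖ ^ 2 ≤ Q := by
    have := hzm z hzB
    rw [hQdef]; linarith
  have hn2 : α * ‖z - c‖ ^ 2 < α * r0 ^ 2 := by linarith
  have hn3 : ‖z - c‖ ^ 2 < r0 ^ 2 := lt_of_mul_lt_mul_left hn2 hα.le
  have hznorm : ‖z - c‖ < r0 := by
    nlinarith [norm_nonneg (z - c), hr0]
  have hprox : ProxSubAt g (α • (c - z)) z := by
    apply prox_of_minOn hα hzmin (show (0:ℝ) < 1 - ‖z - c‖ by linarith)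
    intro w hw
    rw [hBdef, Metric.mem_closedBall, dist_eq_norm]
    have := norm_sub_le_norm_sub_add_norm_sub w z c
    linarith
  refine ⟨z, α • (c - z), hprox, ?_, ?_⟩
  · exact hr (show dist z c < r1 from by rw [dist_eq_norm]; linarith)
  · rw [real_inner_smul_left, real_inner_self_eq_norm_sq]
    positivity

/-- Proximal subgradient transfer between `f` and `g = f + (ρ/2)‖·‖²`. -/
lemma proxsub_shift_quadratic {f : EuclideanSpace ℝ (Fin p) → ℝ} {ρ : ℝ}
    {v x : EuclideanSpace ℝ (Fin p)}
    (h : ProxSubAt (fun z => f z + ρ / 2 * ‖z‖ ^ 2) v x) (hρ : 0 ≤ ρ) :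
    ProxSubAt f (v - ρ • x) x := by
  obtain ⟨C, hC, ε, hε, hineq⟩ := h
  refine ⟨C + ρ / 2, by linarith, ε, hε, ?_⟩
  intro y hy
  have h1 := hineq y hy
  have hexp : ‖y‖ ^ 2 = ‖x‖ ^ 2 + 2 * (inner ℝ x (y - x) : ℝ) + ‖y - x‖ ^ 2 := by
    conv_lhs => rw [show y = x + (y - x) from by abel]
    rw [norm_add_sq_real]
  have hexp2 : ρ / 2 * ‖y‖ ^ 2 =
      ρ / 2 * ‖x‖ ^ 2 + ρ * (inner ℝ x (y - x) : ℝ) + ρ / 2 * ‖y - x‖ ^ 2 := by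
    rw [hexp]; ring
  have hinner : (inner ℝ (v - ρ • x) (y - x) : ℝ) =
      (inner ℝ v (y - x) : ℝ) - ρ * (inner ℝ x (y - x) : ℝ) := by
    rw [inner_sub_left, real_inner_smul_left]
  rw [hinner]
  simp only at h1
  linarith

end WCSupport

set_option maxHeartbeats 2000000 in
/-- A lower semicontinuous `f : ℝ^p → ℝ` is `ρ`-weakly convex iff its
subdifferential is `ρ`-hypomonotone: for all `x, y`, `v ∈ ∂f(x)`, `w ∈ ∂f(y)`,
`⟨v - w, x - y⟩ ≥ -ρ‖x - y‖²`. -/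
theorem weaklyConvex_iff_hypomonotone (p : ℕ) (hp : 0 < p)
    (f : EuclideanSpace ℝ (Fin p) → ℝ) (ρ : ℝ) (hρ : 0 ≤ ρ)
    (hf : LowerSemicontinuous f) :
    ConvexOn ℝ Set.univ (fun x => f x + ρ / 2 * ‖x‖ ^ 2) ↔
      ∀ x y v w : EuclideanSpace ℝ (Fin p), FSubgradAt f v x → FSubgradAt f w y →
        (inner ℝ (v - w) (x - y) : ℝ) ≥ -ρ * ‖x - y‖ ^ 2 := by
  set g : EuclideanSpace ℝ (Fin p) → ℝ := fun x => f x + ρ / 2 * ‖x‖ ^ 2 with hgdef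
  clear_value g
  constructor
  · -- convex ⇒ hypomonotone
    intro hconv x y v w hv hw
    have hsupp : ∀ (x1 v1 : EuclideanSpace ℝ (Fin p)), FSubgradAt f v1 x1 →
        ∀ z, g x1 + (inner ℝ (v1 + ρ • x1) (z - x1) : ℝ) ≤ g z := by
      intro x1 v1 hv1 z
      by_contra hcon
      push_neg at hcon
      set v' := v1 + ρ • x1 with hv'def
      clear_value v'
      have hzx : z ≠ x1 := by
        rintro rfl
        simp only [sub_self, inner_zero_right, add_zero] at hcon
        exact lt_irrefl _ hcon
      have hnz : 0 < ‖z - x1‖ := by rwa [norm_sub_pos_iff]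
      set δ := g x1 + (inner ℝ v' (z - x1) : ℝ) - g z with hδdef
      clear_value δ
      have hδ : 0 < δ := by rw [hδdef]; linarith
      obtain ⟨K, t, htmem, hKlip⟩ := (hconv.locallyLipschitzOn isOpen_univ) (Set.mem_univ x1)
      rw [nhdsWithin_univ] at htmem
      have hx1t : x1 ∈ t := mem_of_mem_nhds htmem
      obtain ⟨r2, hr2, hballt⟩ := Metric.mem_nhds_iff.mp htmem
      set M := (K : ℝ) + ‖v'‖ + ρ / 2 * r2 with hMdef
      clear_value M
      have hlow : ∀ᶠ y' in 𝓝[{x1}ᶜ] x1,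
          -M ≤ (f y' - f x1 - (inner ℝ v1 (y' - x1) : ℝ)) / ‖y' - x1‖ := by
        have h1 : ∀ᶠ y' in 𝓝 x1, dist y' x1 < r2 :=
          Metric.eventually_nhds_iff.mpr ⟨r2, hr2, fun {_} hy => hy⟩
        filter_upwards [h1.filter_mono nhdsWithin_le_nhds, eventually_mem_nhdsWithin]
          with y' hy' hne'
        have hne'' : y' ≠ x1 := hne'
        have hn : 0 < ‖y' - x1‖ := by rwa [norm_sub_pos_iff]
        rw [dist_eq_norm] at hy'
        have hmem' : y' ∈ t := hballt (by rwa [Metric.mem_ball, dist_eq_norm])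
        have hlip := hKlip.dist_le_mul y' hmem' x1 hx1t
        rw [Real.dist_eq, dist_eq_norm] at hlip
        have hg1 : -((K : ℝ) * ‖y' - x1‖) ≤ g y' - g x1 := by
          have := (abs_le.mp hlip).1
          linarith
        have hiv : -(‖v'‖ * ‖y' - x1‖) ≤ (inner ℝ v' (y' - x1) : ℝ) :=
          (abs_le.mp (abs_real_inner_le_norm _ _)).1
        have hivneg : (inner ℝ v' (y' - x1) : ℝ) ≤ ‖v'‖ * ‖y' - x1‖ :=
          (abs_le.mp (abs_real_inner_le_norm _ _)).2
        have hexp2 : ρ / 2 * ‖y'‖ ^ 2 =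
            ρ / 2 * ‖x1‖ ^ 2 + ρ * (inner ℝ x1 (y' - x1) : ℝ) + ρ / 2 * ‖y' - x1‖ ^ 2 := by
          have hexp : ‖y'‖ ^ 2 = ‖x1‖ ^ 2 + 2 * (inner ℝ x1 (y' - x1) : ℝ) + ‖y' - x1‖ ^ 2 := by
            conv_lhs => rw [show y' = x1 + (y' - x1) from by abel]
            rw [norm_add_sq_real]
          rw [hexp]; ring
        have hivv : (inner ℝ v' (y' - x1) : ℝ) =
            (inner ℝ v1 (y' - x1) : ℝ) + ρ * (inner ℝ x1 (y' - x1) : ℝ) := by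
          rw [hv'def, inner_add_left, real_inner_smul_left]
        have hgy : g y' = f y' + ρ / 2 * ‖y'‖ ^ 2 := by rw [hgdef]
        have hgx : g x1 = f x1 + ρ / 2 * ‖x1‖ ^ 2 := by rw [hgdef]
        have hkey0 : f y' - f x1 - (inner ℝ v1 (y' - x1) : ℝ) =
            (g y' - g x1) - (inner ℝ v' (y' - x1) : ℝ) - ρ / 2 * ‖y' - x1‖ ^ 2 := by
          rw [hgy, hgx, hivv, hexp2]; ring
        have hq : ρ / 2 * ‖y' - x1‖ ^ 2 ≤ ρ / 2 * r2 * ‖y' - x1‖ := by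
          nlinarith [mul_nonneg (mul_nonneg (by linarith : (0:ℝ) ≤ ρ / 2) hn.le)
            (by linarith : (0:ℝ) ≤ r2 - ‖y' - x1‖)]
        rw [le_div_iff₀ hn, hkey0, hMdef]
        linarith [hg1, hivneg, hq]
      have hfreq : ∃ᶠ y' in 𝓝[{x1}ᶜ] x1,
          (f y' - f x1 - (inner ℝ v1 (y' - x1) : ℝ)) / ‖y' - x1‖ ≤ -(δ / ‖z - x1‖) := by
        have htend : Filter.Tendsto (fun τ : ℝ => x1 + τ • (z - x1)) (𝓝[>] (0:ℝ))
            (𝓝[{x1}ᶜ] x1) := by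
          apply tendsto_nhdsWithin_of_tendsto_nhds_of_eventually_within
          · have hcont2 : Continuous (fun τ : ℝ => x1 + τ • (z - x1)) := by continuity
            have h0 := hcont2.tendsto 0
            simp only [zero_smul, add_zero] at h0
            exact h0.mono_left nhdsWithin_le_nhds
          · filter_upwards [self_mem_nhdsWithin] with τ hτ
            have hτ0 : (0:ℝ) < τ := hτ
            simp only [Set.mem_compl_iff, Set.mem_singleton_iff]
            intro heq
            have hz0 : τ • (z - x1) = 0 := by
              have := heq
              rwa [add_eq_left] at this
            rcases smul_eq_zero.mp hz0 with h' | h'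
            · exact absurd h' (ne_of_gt hτ0)
            · rw [sub_eq_zero] at h'; exact hzx h'
        apply htend.frequently
        apply Filter.Eventually.frequently
        filter_upwards [Ioo_mem_nhdsGT_of_mem (Set.left_mem_Ico.mpr one_pos)] with τ hτ
        obtain ⟨hτ0, hτ1⟩ := hτ
        set yt := x1 + τ • (z - x1) with hytdef
        clear_value yt
        have hyt : yt - x1 = τ • (z - x1) := by rw [hytdef]; abel
        have hn' : ‖yt - x1‖ = τ * ‖z - x1‖ := by
          rw [hyt, norm_smul, Real.norm_eq_abs, abs_of_pos hτ0]
        have hnpos : 0 < ‖yt - x1‖ := by rw [hn']; positivity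
        have hcomb : yt = (1 - τ) • x1 + τ • z := by rw [hytdef]; module
        have hgconv := hconv.2 (Set.mem_univ x1) (Set.mem_univ z)
          (by linarith : (0:ℝ) ≤ 1 - τ) hτ0.le (by ring)
        rw [← hcomb] at hgconv
        simp only [smul_eq_mul] at hgconv
        have hexp2' : ρ / 2 * ‖yt‖ ^ 2 =
            ρ / 2 * ‖x1‖ ^ 2 + ρ * (inner ℝ x1 (yt - x1) : ℝ) + ρ / 2 * ‖yt - x1‖ ^ 2 := by
          have hexp : ‖yt‖ ^ 2 = ‖x1‖ ^ 2 + 2 * (inner ℝ x1 (yt - x1) : ℝ) + ‖yt - x1‖ ^ 2 := by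
            conv_lhs => rw [show yt = x1 + (yt - x1) from by abel]
            rw [norm_add_sq_real]
          rw [hexp]; ring
        have hivv' : (inner ℝ v' (yt - x1) : ℝ) =
            (inner ℝ v1 (yt - x1) : ℝ) + ρ * (inner ℝ x1 (yt - x1) : ℝ) := by
          rw [hv'def, inner_add_left, real_inner_smul_left]
        have hgyt : g yt = f yt + ρ / 2 * ‖yt‖ ^ 2 := by rw [hgdef]
        have hgx : g x1 = f x1 + ρ / 2 * ‖x1‖ ^ 2 := by rw [hgdef]
        have hkey0' : f yt - f x1 - (inner ℝ v1 (yt - x1) : ℝ) =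
            (g yt - g x1) - (inner ℝ v' (yt - x1) : ℝ) - ρ / 2 * ‖yt - x1‖ ^ 2 := by
          rw [hgyt, hgx, hivv', hexp2']; ring
        have hvt : (inner ℝ v' (yt - x1) : ℝ) = τ * (inner ℝ v' (z - x1) : ℝ) := by
          rw [hyt, real_inner_smul_right]
        have hrhs : -(δ / ‖z - x1‖) * ‖yt - x1‖ = -(τ * δ) := by
          rw [hn']; field_simp
        rw [div_le_iff₀ hnpos, hrhs, hkey0', hδdef]
        have hq2 : 0 ≤ ρ / 2 * ‖yt - x1‖ ^ 2 := by positivity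
        linarith [hgconv, hvt]
      have hc : 0 < δ / ‖z - x1‖ := div_pos hδ hnz
      unfold FSubgradAt at hv1
      rw [Filter.liminf_eq] at hv1
      have hb : sSup {a : ℝ | ∀ᶠ y' in 𝓝[{x1}ᶜ] x1,
          a ≤ (f y' - f x1 - (inner ℝ v1 (y' - x1) : ℝ)) / ‖y' - x1‖} ≤ -(δ / ‖z - x1‖) := by
        apply csSup_le ⟨-M, hlow⟩
        intro a ha
        obtain ⟨y', h1, h2⟩ := (hfreq.and_eventually ha).exists
        linarith
      have hv2 : (0:ℝ) ≤ sSup {a : ℝ | ∀ᶠ y' in 𝓝[{x1}ᶜ] x1,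
          a ≤ (f y' - f x1 - (inner ℝ v1 (y' - x1) : ℝ)) / ‖y' - x1‖} := hv1
      linarith
    have h1 := hsupp x v hv y
    have h2 := hsupp y w hw x
    have k1 : (inner ℝ (v + ρ • x) (y - x) : ℝ) =
        (inner ℝ v (y - x) : ℝ) + ρ * (inner ℝ x (y - x) : ℝ) := by
      rw [inner_add_left, real_inner_smul_left]
    have k2 : (inner ℝ (w + ρ • y) (x - y) : ℝ) =
        (inner ℝ w (x - y) : ℝ) + ρ * (inner ℝ y (x - y) : ℝ) := by
      rw [inner_add_left, real_inner_smul_left]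
    have k3 : (inner ℝ v (y - x) : ℝ) = -(inner ℝ v (x - y) : ℝ) := by
      rw [show y - x = -(x - y) from by abel, inner_neg_right]
    have k4 : (inner ℝ x (y - x) : ℝ) = -(inner ℝ x (x - y) : ℝ) := by
      rw [show y - x = -(x - y) from by abel, inner_neg_right]
    have k5 : (inner ℝ x (x - y) : ℝ) - (inner ℝ y (x - y) : ℝ) = ‖x - y‖ ^ 2 := by
      rw [← inner_sub_left, real_inner_self_eq_norm_sq]
    have m4 : ρ * (inner ℝ x (y - x) : ℝ) = -(ρ * (inner ℝ x (x - y) : ℝ)) := by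
      rw [k4]; ring
    have m5 : ρ * (inner ℝ x (x - y) : ℝ) =
        ρ * (inner ℝ y (x - y) : ℝ) + ρ * ‖x - y‖ ^ 2 := by
      rw [← k5]; ring
    rw [ge_iff_le, inner_sub_left]
    rw [k1, k3, m4] at h1
    rw [k2] at h2
    linarith [m5]
  · -- hypomonotone ⇒ convex
    intro H
    have hqcont : Continuous fun x : EuclideanSpace ℝ (Fin p) => ρ / 2 * ‖x‖ ^ 2 :=
      continuous_const.mul (continuous_norm.pow 2)
    have hglsc : LowerSemicontinuous g := by
      rw [hgdef]; exact hf.add hqcont.lowerSemicontinuous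
    have hmono : ∀ x y v w : EuclideanSpace ℝ (Fin p), ProxSubAt g v x → ProxSubAt g w y →
        0 ≤ (inner ℝ (v - w) (x - y) : ℝ) := by
      intro x y v w hvx hwy
      rw [hgdef] at hvx hwy
      have fv : FSubgradAt f (v - ρ • x) x := (proxsub_shift_quadratic hvx hρ).fsubgradAt
      have fw : FSubgradAt f (w - ρ • y) y := (proxsub_shift_quadratic hwy hρ).fsubgradAt
      have h1 := H x y (v - ρ • x) (w - ρ • y) fv fw
      have hid : (v - ρ • x) - (w - ρ • y) = (v - w) - ρ • (x - y) := by
        rw [smul_sub]; abel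
      rw [ge_iff_le, hid, inner_sub_left, real_inner_smul_left,
        real_inner_self_eq_norm_sq] at h1
      linarith
    refine ⟨convex_univ, ?_⟩
    intro a _ b _ s t hs ht hst
    simp only [smul_eq_mul]
    have key : ∀ ε : ℝ, 0 < ε → g (s • a + t • b) ≤ s * g a + t * g b + ε := by
      intro ε hε
      obtain ⟨z, u, hprox, hval, hdir⟩ := exists_prox_near hglsc (s • a + t • b) hε
      have ha' := support_of_monotone hglsc hmono hprox a
      have hb' := support_of_monotone hglsc hmono hprox b
      have has : s * (g z + (inner ℝ u (a - z) : ℝ)) ≤ s * g a :=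
        mul_le_mul_of_nonneg_left ha' hs
      have hbs : t * (g z + (inner ℝ u (b - z) : ℝ)) ≤ t * g b :=
        mul_le_mul_of_nonneg_left hb' ht
      have hsum : s * (inner ℝ u (a - z) : ℝ) + t * (inner ℝ u (b - z) : ℝ) =
          (inner ℝ u ((s • a + t • b) - z) : ℝ) := by
        rw [← real_inner_smul_right, ← real_inner_smul_right, ← inner_add_right]
        congr 1
        have hz1 : s • z + t • z = z := by rw [← add_smul, hst, one_smul]
        calc s • (a - z) + t • (b - z) = (s • a + t • b) - (s • z + t • z) := by
              rw [smul_sub, smul_sub]; abel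
          _ = (s • a + t • b) - z := by rw [hz1]
      have hgz : s * g z + t * g z = g z := by rw [← add_mul, hst, one_mul]
      nlinarith [hdir, hval, has, hbs, hsum, hgz]
    by_contra hcon
    push_neg at hcon
    have := key ((g (s • a + t • b) - (s * g a + t * g b)) / 2) (by linarith)
    linarith
end

section
/- Let (α_k)_{k ≥ 1} be the real sequence defined by α_1 = 1 and α_{k+1} = (√(α_k⁴ + 4α_k²) − α_k²)/2 for k ≥ 1 (equivalently, α_{k+1} is the unique solution in (0,1) of (1 − α_{k+1})/α_{k+1}² = 1/α_k²). Then for every k ≥ 1: √2/(k + 2) ≤ α_k ≤ 2/(k + 1). -/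
set_option maxHeartbeats 1000000


/-- For the sequence `α₁ = 1`,
`α_{k+1} = (√(α_k⁴ + 4α_k²) − α_k²)/2`, one has `√2/(k+2) ≤ α_k ≤ 2/(k+1)` for all `k ≥ 1`. -/
theorem alpha_growth_bounds (α : ℕ → ℝ) (hα1 : α 1 = 1)
    (hrec : ∀ k : ℕ, 1 ≤ k →
      α (k + 1) = (Real.sqrt ((α k) ^ 4 + 4 * (α k) ^ 2) - (α k) ^ 2) / 2) :
    ∀ k : ℕ, 1 ≤ k →
      Real.sqrt 2 / ((k : ℝ) + 2) ≤ α k ∧ α k ≤ 2 / ((k : ℝ) + 1) := by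
  have hs2 : Real.sqrt 2 ^ 2 = 2 := Real.sq_sqrt (by norm_num)
  have hs_pos : 0 < Real.sqrt 2 := Real.sqrt_pos.mpr (by norm_num)
  have hs_ub : Real.sqrt 2 ≤ 3/2 := by nlinarith [hs2, hs_pos]
  intro k hk
  induction k with
  | zero => omega
  | succ n ih =>
    rcases Nat.lt_or_ge n 1 with h1 | hn
    · -- base case n = 0
      have hn0 : n = 0 := by omega
      subst hn0
      rw [show ((0:ℕ)+1) = 1 from rfl, hα1]
      constructor
      · push_cast
        rw [div_le_one (by norm_num)]
        linarith
      · norm_num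
    · -- inductive step
      obtain ⟨hL, hU⟩ := ih hn
      set a := α n with ha
      set c := (n : ℝ) with hc
      have hc1 : (1:ℝ) ≤ c := by rw [hc]; exact_mod_cast hn
      have hapos : 0 < a := lt_of_lt_of_le (by positivity) hL
      have hD : (0:ℝ) ≤ a^4 + 4*a^2 := by positivity
      have hsd : Real.sqrt (a^4 + 4*a^2) ^ 2 = a^4 + 4*a^2 := Real.sq_sqrt hD
      have hsge : a^2 ≤ Real.sqrt (a^4 + 4*a^2) := by
        nlinarith [Real.sqrt_nonneg (a^4 + 4*a^2), hsd, sq_nonneg a, hapos]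
      set x := α (n+1) with hx
      have hrec' : x = (Real.sqrt (a^4 + 4*a^2) - a^2) / 2 := hrec n hn
      have hx0 : 0 ≤ x := by rw [hrec']; linarith
      have h2x : 2*x + a^2 = Real.sqrt (a^4 + 4*a^2) := by rw [hrec']; ring
      have hsq : (2*x + a^2)^2 = a^4 + 4*a^2 := by rw [h2x, hsd]
      have hquad : x^2 + a^2*x - a^2 = 0 := by nlinarith [hsq]
      have hcast : ((n:ℝ) + 1) = c + 1 := by rw [hc]
      push_cast
      rw [← hc]
      constructor
      · -- lower bound: Real.sqrt 2 / (c + 1 + 2) ≤ x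
        set s := Real.sqrt 2 with hs
        -- a ≥ s/(c+2) ⟹ a²(c+2)² ≥ 2
        have ha2L : 2 ≤ a^2 * (c+2)^2 := by
          have h' : s ≤ a * (c+2) := by
            rw [div_le_iff₀ (by linarith)] at hL; linarith [hL]
          nlinarith [h', hs2, hs_pos, hapos]
        have key2 : s*(c+3) ≤ 2*c + 5 := by
          have := mul_le_mul_of_nonneg_right hs_ub (show (0:ℝ) ≤ c+3 by linarith)
          nlinarith [this]
        have hneg : s*(c+3) - (c+3)^2 ≤ 0 := by nlinarith [key2, sq_nonneg (c+2)]
        have hprod : a^2*(c+2)^2 * (s*(c+3) - (c+3)^2) ≤ 2 * (s*(c+3) - (c+3)^2) :=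
          mul_le_mul_of_nonpos_right ha2L hneg
        have M : 2*(c+2)^2 + a^2*(c+2)^2*(s*(c+3) - (c+3)^2) ≤ 0 := by
          nlinarith [hprod, key2]
        have hN : 2 + a^2*(s*(c+3)) - a^2*(c+3)^2 ≤ 0 := by
          have hq : (0:ℝ) < (c+2)^2 := by positivity
          nlinarith [M, hq]
        have hLineq : (s/(c+3))^2 + a^2*(s/(c+3)) - a^2 ≤ 0 := by
          have e : (s/(c+3))^2 + a^2*(s/(c+3)) - a^2
              = (2 + a^2*(s*(c+3)) - a^2*(c+3)^2) / (c+3)^2 := by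
            rw [div_pow, hs2]
            field_simp
          rw [e]
          exact div_nonpos_of_nonpos_of_nonneg hN (by positivity)
        have ht_pos : 0 < s/(c+3) := by positivity
        rw [show (c:ℝ)+1+2 = c+3 from by ring]
        nlinarith [hquad, hLineq, hx0, ht_pos, sq_nonneg a]
      · -- upper bound: x ≤ 2/(c + 1 + 1)
        have ha2q : a^2 * (c+1)^2 ≤ 4 := by
          have h' : a * (c+1) ≤ 2 := by
            rw [le_div_iff₀ (by linarith)] at hU; linarith [hU]
          nlinarith [h', mul_nonneg hapos.le (show (0:ℝ) ≤ c+1 by linarith)]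
        have key : 4 + a^2*(2*(c+2)) - a^2*(c+2)^2 ≥ 0 := by
          nlinarith [ha2q, sq_nonneg a]
        have hTineq : (2/(c+2))^2 + a^2*(2/(c+2)) - a^2 ≥ 0 := by
          have e : (2/(c+2))^2 + a^2*(2/(c+2)) - a^2
              = (4 + a^2*(2*(c+2)) - a^2*(c+2)^2) / (c+2)^2 := by
            field_simp
            ring
          rw [e]
          positivity
        have ht_pos : 0 < 2/(c+2) := by positivity
        rw [show (c:ℝ)+1+1 = c+2 from by ring]
        nlinarith [hquad, hTineq, hx0, ht_pos, sq_nonneg a]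
end

section
/- (Outer-loop complexity, nonconvex case.) Let f : ℝ^p → ℝ be bounded below with infimum f*, and let κ > 0. Suppose sequences (x_k)_{k ≥ 0} and (x̄_k)_{k ≥ 1} in ℝ^p satisfy, for every k ≥ 1: (i) there exists v_k ∈ ∂(f_κ(·; x_{k−1}))(x̄_k) with ‖v_k‖ ≤ κ‖x̄_k − x_{k−1}‖ (adaptive stationarity); (ii) f(x̄_k) + (κ/2)‖x̄_k − x_{k−1}‖² ≤ f(x_{k−1}) (descent condition); (iii) f(x_k) ≤ f(x̄_k). Then for every integer N ≥ 1 there exist an index j with 1 ≤ j ≤ N and a subgradient w ∈ ∂f(x̄_j) such that ‖w‖² ≤ (8κ/N)·(f(x_0) − f*). -/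
open Filter Topology

lemma liminf_aux {α : Type*} {l : Filter α} {F G e : α → ℝ}
    (hom : ∀ y, G y = F y + e y) (he : ∀ y, 0 ≤ e y)
    (het : Filter.Tendsto e l (nhds 0)) (hG : 0 ≤ Filter.liminf G l) :
    0 ≤ Filter.liminf F l := by
  rw [Filter.liminf_eq] at hG ⊢
  set Sg := {a : ℝ | ∀ᶠ y in l, a ≤ G y} with hSg
  set Sf := {a : ℝ | ∀ᶠ y in l, a ≤ F y} with hSf
  have hsub : Sf ⊆ Sg := by
    intro a ha
    exact ha.mono fun y hy => by have := he y; rw [hom y]; linarith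
  have hshift : ∀ a ∈ Sg, ∀ ε : ℝ, 0 < ε → a - ε ∈ Sf := by
    intro a ha ε hε
    have h1 : ∀ᶠ y in l, e y < ε := het.eventually (gt_mem_nhds hε)
    filter_upwards [ha, h1] with y h2 h3
    have := hom y; linarith
  by_cases hne : Sf.Nonempty
  · by_cases hbd : BddAbove Sf
    · by_contra hc
      push_neg at hc
      set ε : ℝ := -sSup Sf with hεdef
      have hε : 0 < ε := by simp [hεdef]; linarith
      have hSgne : Sg.Nonempty := hne.mono hsub
      have hlt : -(ε/2) < sSup Sg := by linarith
      obtain ⟨a, haSg, halt⟩ := exists_lt_of_lt_csSup hSgne hlt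
      have hain : a - ε/2 ∈ Sf := hshift a haSg (ε/2) (by linarith)
      have := le_csSup hbd hain
      linarith
    · rw [Real.sSup_of_not_bddAbove hbd]
  · rw [Set.not_nonempty_iff_eq_empty] at hne
    rw [hne, Real.sSup_empty]

lemma quad_transfer {p : ℕ} {f : EuclideanSpace ℝ (Fin p) → ℝ} {κ : ℝ}
    (hκ : 0 ≤ κ) {c v xb : EuclideanSpace ℝ (Fin p)}
    (h : FSubgradAt (fun z => f z + κ / 2 * ‖z - c‖ ^ 2) v xb) :
    FSubgradAt f (v - κ • (xb - c)) xb := by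
  unfold FSubgradAt at h ⊢
  set l := nhdsWithin xb ({xb}ᶜ : Set (EuclideanSpace ℝ (Fin p)))
  set e : EuclideanSpace ℝ (Fin p) → ℝ := fun y => κ / 2 * ‖y - xb‖ with hedef
  have het : Filter.Tendsto e l (nhds 0) := by
    have h1 : Filter.Tendsto e (nhds xb) (nhds (κ / 2 * ‖xb - xb‖)) := by
      exact (continuous_const.mul ((continuous_id.sub continuous_const).norm)).tendsto xb
    simp only [sub_self, norm_zero, mul_zero] at h1
    exact h1.mono_left nhdsWithin_le_nhds
  refine liminf_aux (G := fun y => ((f y + κ / 2 * ‖y - c‖ ^ 2) -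
      (f xb + κ / 2 * ‖xb - c‖ ^ 2) - (inner ℝ v (y - xb) : ℝ)) / ‖y - xb‖)
      (e := e) ?_ ?_ het h
  · intro y
    by_cases hy : y = xb
    · subst hy
      simp [hedef]
    · have hn : ‖y - xb‖ ≠ 0 := by
        simpa [sub_eq_zero] using hy
      have hid : y - c = (y - xb) + (xb - c) := by abel
      have hexp : ‖y - c‖ ^ 2 = ‖y - xb‖ ^ 2 + 2 * (inner ℝ (y - xb) (xb - c) : ℝ)
          + ‖xb - c‖ ^ 2 := by rw [hid, norm_add_sq_real]
      have hin : (inner ℝ (v - κ • (xb - c)) (y - xb) : ℝ)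
          = (inner ℝ v (y - xb) : ℝ) - κ * (inner ℝ (xb - c) (y - xb) : ℝ) := by
        rw [inner_sub_left, real_inner_smul_left]
      have key : (f y + κ / 2 * ‖y - c‖ ^ 2) - (f xb + κ / 2 * ‖xb - c‖ ^ 2)
          - (inner ℝ v (y - xb) : ℝ)
          = (f y - f xb - (inner ℝ (v - κ • (xb - c)) (y - xb) : ℝ))
            + κ / 2 * ‖y - xb‖ ^ 2 := by
        rw [hin, hexp, real_inner_comm (y - xb) (xb - c)]; ring
      beta_reduce
      rw [key, add_div]
      simp only [hedef]
      congr 1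
      rw [pow_two, mul_comm]
      field_simp
  · intro y
    exact mul_nonneg (by linarith) (norm_nonneg _)

/-- Outer-loop complexity, nonconvex case. -/
theorem outer_loop_complexity_nonconvex (p : ℕ) (hp : 0 < p)
    (f : EuclideanSpace ℝ (Fin p) → ℝ) (fstar : ℝ)
    (hinf : IsGLB (Set.range f) fstar)
    (κ : ℝ) (hκ : 0 < κ)
    (x xbar : ℕ → EuclideanSpace ℝ (Fin p))
    (hstat : ∀ k : ℕ, 1 ≤ k → ∃ v : EuclideanSpace ℝ (Fin p),
      FSubgradAt (fun z => f z + κ / 2 * ‖z - x (k - 1)‖ ^ 2) v (xbar k) ∧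
        ‖v‖ ≤ κ * ‖xbar k - x (k - 1)‖)
    (hdescent : ∀ k : ℕ, 1 ≤ k →
      f (xbar k) + κ / 2 * ‖xbar k - x (k - 1)‖ ^ 2 ≤ f (x (k - 1)))
    (hbest : ∀ k : ℕ, 1 ≤ k → f (x k) ≤ f (xbar k)) :
    ∀ N : ℕ, 1 ≤ N → ∃ j : ℕ, 1 ≤ j ∧ j ≤ N ∧
      ∃ w : EuclideanSpace ℝ (Fin p), FSubgradAt f w (xbar j) ∧
        ‖w‖ ^ 2 ≤ 8 * κ / (N : ℝ) * (f (x 0) - fstar) := by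
  intro N hN
  have hlow : ∀ z, fstar ≤ f z := fun z => hinf.1 ⟨z, rfl⟩
  -- per-step decrease
  have key : ∀ k ∈ Finset.range N,
      κ / 2 * ‖xbar (k + 1) - x k‖ ^ 2 ≤ f (x k) - f (x (k + 1)) := by
    intro k _
    have h1 := hdescent (k + 1) (Nat.le_add_left 1 k)
    have h2 := hbest (k + 1) (Nat.le_add_left 1 k)
    simp only [Nat.add_sub_cancel] at h1
    linarith
  have hsum : ∑ k ∈ Finset.range N, κ / 2 * ‖xbar (k + 1) - x k‖ ^ 2
      ≤ f (x 0) - fstar := by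
    calc ∑ k ∈ Finset.range N, κ / 2 * ‖xbar (k + 1) - x k‖ ^ 2
        ≤ ∑ k ∈ Finset.range N, (f (x k) - f (x (k + 1))) := Finset.sum_le_sum key
      _ = f (x 0) - f (x N) := Finset.sum_range_sub' (fun k => f (x k)) N
      _ ≤ f (x 0) - fstar := by have := hlow (x N); linarith
  have hNpos : (0 : ℝ) < (N : ℝ) := by exact_mod_cast hN
  have hsum' : ∑ k ∈ Finset.range N, κ / 2 * ‖xbar (k + 1) - x k‖ ^ 2
      ≤ ∑ _k ∈ Finset.range N, (f (x 0) - fstar) / N := by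
    have hcc : (N : ℝ) * ((f (x 0) - fstar) / N) = f (x 0) - fstar := by
      field_simp
    rw [Finset.sum_const, Finset.card_range, nsmul_eq_mul, hcc]
    exact hsum
  obtain ⟨k, hkmem, hk⟩ := Finset.exists_le_of_sum_le
    (Finset.nonempty_range_iff.mpr (by omega)) hsum'
  refine ⟨k + 1, Nat.le_add_left 1 k, by
    have := Finset.mem_range.mp hkmem; omega, ?_⟩
  obtain ⟨v, hv, hvnorm⟩ := hstat (k + 1) (Nat.le_add_left 1 k)
  simp only [Nat.add_sub_cancel] at hv hvnorm
  refine ⟨v - κ • (xbar (k + 1) - x k), quad_transfer (le_of_lt hκ) hv, ?_⟩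
  set Δ : ℝ := ‖xbar (k + 1) - x k‖ with hΔ
  have hwle : ‖v - κ • (xbar (k + 1) - x k)‖ ≤ 2 * κ * Δ := by
    calc ‖v - κ • (xbar (k + 1) - x k)‖ ≤ ‖v‖ + ‖κ • (xbar (k + 1) - x k)‖ :=
          norm_sub_le _ _
      _ = ‖v‖ + κ * Δ := by rw [norm_smul, Real.norm_eq_abs, abs_of_pos hκ]
      _ ≤ 2 * κ * Δ := by linarith
  have hwnn : (0 : ℝ) ≤ ‖v - κ • (xbar (k + 1) - x k)‖ := norm_nonneg _
  have hsq : ‖v - κ • (xbar (k + 1) - x k)‖ ^ 2 ≤ (2 * κ * Δ) ^ 2 := by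
    exact pow_le_pow_left₀ hwnn hwle 2
  have hΔsq : κ / 2 * Δ ^ 2 ≤ (f (x 0) - fstar) / N := hk
  have hfin : (2 * κ * Δ) ^ 2 ≤ 8 * κ / N * (f (x 0) - fstar) := by
    calc (2 * κ * Δ) ^ 2 = 8 * κ * (κ / 2 * Δ ^ 2) := by ring
      _ ≤ 8 * κ * ((f (x 0) - fstar) / N) :=
          mul_le_mul_of_nonneg_left hΔsq (by linarith)
      _ = 8 * κ / N * (f (x 0) - fstar) := by ring
  linarith
end

section
/- (Prox-gradient initialization bound.) Let f_0 : ℝ^p → ℝ be differentiable with L-Lipschitz gradient (L > 0), let ψ : ℝ^p → ℝ be convex, and set f = f_0 + ψ. Fix κ > 0 and y ∈ ℝ^p, and suppose the function x ↦ f_0(x) + (κ/2)‖x − y‖² is convex. Let y⁰ be a minimizer of z ↦ ψ(z) + ((κ+L)/2)‖z − (y − (1/(κ+L))∇f_0(y))‖² (the proximal-gradient step from y with step size 1/(κ+L)), and let y* be a minimizer of f_κ(·; y). Then f_κ(y⁰; y) − f_κ(y*; y) ≤ ((κ+L)/2)·‖y* − y‖². -/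
open InnerProductSpace Set

section Aux

variable {E : Type*} [NormedAddCommGroup E] [InnerProductSpace ℝ E] [CompleteSpace E]

lemma aux_lineDeriv (h : E → ℝ) (G : E) (x v : E) (t : ℝ)
    (hg : HasGradientAt h G (x + t • v)) :
    HasDerivAt (fun s : ℝ => h (x + s • v)) (inner ℝ G v : ℝ) t := by
  have h1 : HasFDerivAt h (toDual ℝ E G) (x + t • v) := hg.hasFDerivAt
  have h2 : HasDerivAt (fun s : ℝ => x + s • v) v t := by
    simpa using ((hasDerivAt_id t).smul_const v).const_add x
  have h3 := h1.comp_hasDerivAt t h2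
  simp at h3
  exact h3

lemma aux_first_order (h : E → ℝ) (hc : ConvexOn ℝ Set.univ h)
    {x G : E} (hg : HasGradientAt h G x) (z : E) :
    h x + (inner ℝ G (z - x) : ℝ) ≤ h z := by
  rcases eq_or_ne z x with rfl | hne
  · simp
  · set φ := fun s : ℝ => h (x + s • (z - x)) with hφ
    have hφc : ConvexOn ℝ Set.univ φ := by
      have := hc.comp_affineMap (AffineMap.lineMap x z : ℝ →ᵃ[ℝ] E)
      simp only [Set.preimage_univ] at this
      have hfun : (h ∘ AffineMap.lineMap x z) = φ := by
        funext s
        simp [φ, AffineMap.lineMap_apply_module', add_comm]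
      rw [hfun] at this
      exact this
    have hder : HasDerivAt φ (inner ℝ G (z - x) : ℝ) 0 := by
      apply aux_lineDeriv h G x (z - x) 0
      simpa using hg
    have := hφc.le_slope_of_hasDerivAt (Set.mem_univ 0) (Set.mem_univ 1) zero_lt_one hder
    have hs : slope φ 0 1 = h z - h x := by
      simp [slope, φ]
    rw [hs] at this
    linarith

lemma aux_descent (f₀ : E → ℝ) (g : E → E) (L : ℝ) (hL : 0 < L)
    (hgrad : ∀ x, HasGradientAt f₀ (g x) x)
    (hlip : ∀ x y, ‖g x - g y‖ ≤ L * ‖x - y‖) (x y : E) :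
    f₀ x ≤ f₀ y + (inner ℝ (g y) (x - y) : ℝ) + L / 2 * ‖x - y‖ ^ 2 := by
  set v := x - y with hv
  set φ := fun s : ℝ => f₀ (y + s • v) with hφ
  have hd : ∀ t : ℝ, HasDerivAt φ (inner ℝ (g (y + t • v)) v : ℝ) t := fun t =>
    aux_lineDeriv f₀ _ y v t (hgrad _)
  have hgc : Continuous g := by
    have : LipschitzWith (Real.toNNReal L) g := by
      apply LipschitzWith.of_dist_le_mul
      intro a b
      rw [dist_eq_norm, dist_eq_norm]
      calc ‖g a - g b‖ ≤ L * ‖a - b‖ := hlip a b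
        _ = (Real.toNNReal L : ℝ) * ‖a - b‖ := by rw [Real.coe_toNNReal _ hL.le]
    exact this.continuous
  have hcont : Continuous fun t : ℝ => (inner ℝ (g (y + t • v)) v : ℝ) := by
    apply Continuous.inner
    · exact hgc.comp (continuous_const.add ((continuous_id.smul continuous_const)))
    · exact continuous_const
  have key : φ 1 - φ 0 = ∫ t in (0:ℝ)..1, (inner ℝ (g (y + t • v)) v : ℝ) :=
    (intervalIntegral.integral_eq_sub_of_hasDerivAt (fun t _ => hd t)
      (hcont.intervalIntegrable 0 1)).symm
  have hbound : ∀ t ∈ Set.Icc (0:ℝ) 1,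
      (inner ℝ (g (y + t • v)) v : ℝ) ≤ (inner ℝ (g y) v : ℝ) + L * ‖v‖ ^ 2 * t := by
    intro t ht
    have h1 : (inner ℝ (g (y + t • v)) v : ℝ) - inner ℝ (g y) v = inner ℝ (g (y + t • v) - g y) v := by
      rw [inner_sub_left]
    have h2 : (inner ℝ (g (y + t • v) - g y) v : ℝ) ≤ ‖g (y + t • v) - g y‖ * ‖v‖ :=
      real_inner_le_norm _ _
    have h3 : ‖g (y + t • v) - g y‖ ≤ L * (t * ‖v‖) := by
      have := hlip (y + t • v) y
      simpa [norm_smul, abs_of_nonneg ht.1] using this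
    have h4 : ‖g (y + t • v) - g y‖ * ‖v‖ ≤ L * (t * ‖v‖) * ‖v‖ :=
      mul_le_mul_of_nonneg_right h3 (norm_nonneg _)
    nlinarith [norm_nonneg v]
  have hint : (∫ t in (0:ℝ)..1, (inner ℝ (g (y + t • v)) v : ℝ)) ≤
      ∫ t in (0:ℝ)..1, ((inner ℝ (g y) v : ℝ) + L * ‖v‖ ^ 2 * t) := by
    apply intervalIntegral.integral_mono_on zero_le_one
      (hcont.intervalIntegrable 0 1)
    · exact (continuous_const.add (continuous_const.mul continuous_id)).intervalIntegrable 0 1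
    · exact hbound
  have hval : (∫ t in (0:ℝ)..1, ((inner ℝ (g y) v : ℝ) + L * ‖v‖ ^ 2 * t)) =
      (inner ℝ (g y) v : ℝ) + L / 2 * ‖v‖ ^ 2 := by
    rw [intervalIntegral.integral_add (f := fun _ => (inner ℝ (g y) v : ℝ))
      (g := fun t : ℝ => L * ‖v‖ ^ 2 * t) (intervalIntegrable_const)
      ((continuous_const.mul continuous_id').intervalIntegrable 0 1),
      intervalIntegral.integral_const_mul, integral_id]
    norm_num
    ring
  have : φ 1 - φ 0 ≤ (inner ℝ (g y) v : ℝ) + L / 2 * ‖v‖ ^ 2 := by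
    rw [key]; rw [hval] at hint; exact hint
  have hφ1 : φ 1 = f₀ x := by simp [φ, hv]
  have hφ0 : φ 0 = f₀ y := by simp [φ]
  rw [hφ1, hφ0] at this
  linarith

end Aux

set_option synthInstance.maxHeartbeats 1000000
set_option maxHeartbeats 1000000

/-- Prox-gradient initialization bound. With `f = f₀ + ψ`, `f₀` having
`L`-Lipschitz gradient `g`, `ψ` convex, and `x ↦ f₀ x + (κ/2)‖x − y‖²` convex, if `y⁰`
is the proximal-gradient step from `y` with step `1/(κ+L)` and `y*` minimizes
`f_κ(·; y)`, then `f_κ(y⁰; y) − f_κ(y*; y) ≤ ((κ+L)/2)‖y* − y‖²`. -/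
theorem prox_gradient_initialization_bound (p : ℕ) (hp : 0 < p)
    (f₀ ψ : EuclideanSpace ℝ (Fin p) → ℝ)
    (g : EuclideanSpace ℝ (Fin p) → EuclideanSpace ℝ (Fin p))
    (L : ℝ) (hL : 0 < L)
    (hgrad : ∀ x, HasGradientAt f₀ (g x) x)
    (hlip : ∀ x y, ‖g x - g y‖ ≤ L * ‖x - y‖)
    (hψ : ConvexOn ℝ Set.univ ψ)
    (κ : ℝ) (hκ : 0 < κ) (y : EuclideanSpace ℝ (Fin p))
    (hconv : ConvexOn ℝ Set.univ (fun x => f₀ x + κ / 2 * ‖x - y‖ ^ 2))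
    (y0 : EuclideanSpace ℝ (Fin p))
    (hy0 : ∀ z, ψ y0 + (κ + L) / 2 * ‖y0 - (y - (1 / (κ + L)) • g y)‖ ^ 2 ≤
      ψ z + (κ + L) / 2 * ‖z - (y - (1 / (κ + L)) • g y)‖ ^ 2)
    (ystar : EuclideanSpace ℝ (Fin p))
    (hystar : ∀ z, f₀ ystar + ψ ystar + κ / 2 * ‖ystar - y‖ ^ 2 ≤
      f₀ z + ψ z + κ / 2 * ‖z - y‖ ^ 2) :
    (f₀ y0 + ψ y0 + κ / 2 * ‖y0 - y‖ ^ 2) -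
        (f₀ ystar + ψ ystar + κ / 2 * ‖ystar - y‖ ^ 2) ≤
      (κ + L) / 2 * ‖ystar - y‖ ^ 2 := by
  have hκL : (0:ℝ) < κ + L := by linarith
  have hspos : (0:ℝ) < 1 / (κ + L) := by positivity
  -- expansion of the prox objective
  have hexp : ∀ z : EuclideanSpace ℝ (Fin p),
      (κ + L) / 2 * ‖z - (y - (1 / (κ + L)) • g y)‖ ^ 2 =
      (κ + L) / 2 * ‖z - y‖ ^ 2 + (inner ℝ (g y) (z - y) : ℝ) +
        (1 / (κ + L)) / 2 * ‖g y‖ ^ 2 := by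
    intro z
    have h1 : z - (y - (1 / (κ + L)) • g y) = (z - y) + (1 / (κ + L)) • g y := by abel
    rw [h1, norm_add_sq_real, real_inner_smul_right, norm_smul, Real.norm_eq_abs,
      abs_of_pos hspos, real_inner_comm]
    field_simp
  have hA : ψ y0 + (κ + L) / 2 * ‖y0 - y‖ ^ 2 + (inner ℝ (g y) (y0 - y) : ℝ) ≤
      ψ ystar + (κ + L) / 2 * ‖ystar - y‖ ^ 2 + (inner ℝ (g y) (ystar - y) : ℝ) := by
    have := hy0 ystar
    rw [hexp y0, hexp ystar] at this
    linarith
  have hB : f₀ y0 ≤ f₀ y + (inner ℝ (g y) (y0 - y) : ℝ) + L / 2 * ‖y0 - y‖ ^ 2 :=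
    aux_descent f₀ g L hL hgrad hlip y0 y
  -- gradient of the κ-regularized function at y is G
  have hq : HasFDerivAt (fun x : EuclideanSpace ℝ (Fin p) => κ / 2 * ‖x - y‖ ^ 2) (0 : EuclideanSpace ℝ (Fin p) →L[ℝ] ℝ) y := by
    have h0 : HasFDerivAt (fun x : EuclideanSpace ℝ (Fin p) => x - y) (ContinuousLinearMap.id ℝ (EuclideanSpace ℝ (Fin p))) y :=
      (hasFDerivAt_id y).sub_const y
    have h1 := h0.norm_sq
    have h2 : (2 • (innerSL ℝ (y - y)).comp (ContinuousLinearMap.id ℝ (EuclideanSpace ℝ (Fin p)))) =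
        (0 : EuclideanSpace ℝ (Fin p) →L[ℝ] ℝ) := by
      ext w; simp
    rw [h2] at h1
    simpa using h1.const_mul (κ / 2)
  have hgradh : HasGradientAt (fun x : EuclideanSpace ℝ (Fin p) => f₀ x + κ / 2 * ‖x - y‖ ^ 2) (g y) y := by
    rw [hasGradientAt_iff_hasFDerivAt]
    have h3 := ((hgrad y).hasFDerivAt).add hq
    simp at h3
    exact h3
  have hC := aux_first_order _ hconv hgradh ystar
  simp only [sub_self, norm_zero] at hC
  -- hC : f₀ y + κ/2 * 0 ^ 2 + inner ℝ (g y) (ystar - y) ≤ f₀ ystar + κ/2 ‖ystar - y‖^2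
  have h02 : (0:ℝ) ^ 2 = 0 := by norm_num
  rw [h02, mul_zero, add_zero] at hC
  linarith
end

section
/- Let f : ℝ^p → ℝ be ρ-weakly convex, let κ > ρ ≥ 0, fix y ∈ ℝ^p, and let y* be a minimizer of f_κ(·; y). Let ε be a real number with 0 < ε ≤ (κ − ρ)/2. If z ∈ ℝ^p and v ∈ ∂(f_κ(·; y))(z) satisfy ‖v‖ ≤ ε‖y* − y‖, then ‖v‖ ≤ 2ε‖z − y‖. -/
open Filter Topology

lemma aux_le {A B : ℝ} (hA : 0 ≤ A) (h : ∀ s : ℝ, 0 < s → s < 1 → (1 - s) * A ≤ B) : A ≤ B := by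
  by_contra hlt
  push_neg at hlt
  have h1 := h (1/2) (by norm_num) (by norm_num)
  have hA0 : 0 < A := by nlinarith
  have hs : 0 < (A - B) / (2 * A) := div_pos (by linarith) (by linarith)
  set s := min (1/2 : ℝ) ((A - B) / (2 * A)) with hsdef
  have hs0 : 0 < s := lt_min (by norm_num) hs
  have hs1 : s < 1 := lt_of_le_of_lt (min_le_left _ _) (by norm_num)
  have h2 := h s hs0 hs1
  have hsle : s ≤ (A - B) / (2 * A) := min_le_right _ _
  have h3 : s * A ≤ (A - B) / 2 := by
    calc s * A ≤ (A - B) / (2 * A) * A := by nlinarith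
    _ = (A - B) / 2 := by field_simp
  nlinarith

lemma key_subgrad {p : ℕ} {G : EuclideanSpace ℝ (Fin p) → ℝ} {μ : ℝ} (hμ : 0 < μ)
    (hG : StrongConvexOn Set.univ μ G) {z v : EuclideanSpace ℝ (Fin p)}
    (hv : FSubgradAt G v z) (w : EuclideanSpace ℝ (Fin p)) :
    G z + (inner ℝ v (w - z) : ℝ) + μ / 2 * ‖w - z‖ ^ 2 ≤ G w := by
  rcases eq_or_ne w z with rfl | hwz
  · simp
  set u : EuclideanSpace ℝ (Fin p) → ℝ :=
    fun x => (G x - G z - (inner ℝ v (x - z) : ℝ)) / ‖x - z‖ with hu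
  set d : ℝ := ‖w - z‖ with hd
  have hd0 : 0 < d := by
    rw [hd, norm_pos_iff]; exact sub_ne_zero.2 hwz
  set X : ℝ := (inner ℝ v (w - z) : ℝ) with hX
  -- boundedness below of u near z
  have hGconv : ConvexOn ℝ Set.univ G :=
    hG.convexOn (fun r => by positivity)
  obtain ⟨K, t0, ht0, hK⟩ := hGconv.locallyLipschitzOn isOpen_univ (Set.mem_univ z)
  rw [nhdsWithin_univ] at ht0
  have hz0 : z ∈ t0 := mem_of_mem_nhds ht0
  have hbdd : IsBoundedUnder (· ≥ ·) (nhdsWithin z {z}ᶜ) u := by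
    refine ⟨-(K + ‖v‖), eventually_map.2 ?_⟩
    filter_upwards [mem_nhdsWithin_of_mem_nhds ht0, self_mem_nhdsWithin] with x hx hne
    have hxz : (0:ℝ) < ‖x - z‖ := by
      rw [norm_pos_iff]; exact sub_ne_zero.2 hne
    have hG1 : |G x - G z| ≤ K * ‖x - z‖ := by
      have := hK.dist_le_mul x hx z hz0
      rwa [Real.dist_eq, dist_eq_norm] at this
    have hI : |(inner ℝ v (x - z) : ℝ)| ≤ ‖v‖ * ‖x - z‖ := abs_real_inner_le_norm v (x - z)
    have h1 := abs_le.1 hG1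
    have h2 := abs_le.1 hI
    rw [ge_iff_le, hu, le_div_iff₀ hxz]
    nlinarith
  -- the key inequality for each s
  have hkey : ∀ s : ℝ, 0 < s → s < 1 → (1 - s) * (μ / 2 * d) ≤ (G w - G z - X) / d := by
    intro s hs0 hs1
    set B : ℝ := (G w - G z - X) / d - (1 - s) * (μ / 2 * d) with hB
    have hBc : (G w - G z - X) / d - (1 - s) * (μ / 2 * d) = B := rfl
    -- tendsto of the segment map
    have htend : Tendsto (fun t : ℝ => z + t • (w - z)) (nhdsWithin 0 (Set.Ioi 0))
        (nhdsWithin z {z}ᶜ) := by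
      apply tendsto_nhdsWithin_of_tendsto_nhds_of_eventually_within
      · have : Tendsto (fun t : ℝ => z + t • (w - z)) (nhds 0) (nhds (z + (0:ℝ) • (w - z))) := by
          exact Tendsto.add tendsto_const_nhds (tendsto_id.smul_const _)
        simpa using this.mono_left nhdsWithin_le_nhds
      · filter_upwards [self_mem_nhdsWithin] with t ht
        have : t • (w - z) ≠ 0 := smul_ne_zero (ne_of_gt ht) (sub_ne_zero.2 hwz)
        simp only [Set.mem_compl_iff, Set.mem_singleton_iff]
        intro hcon
        exact this (by rwa [add_eq_left] at hcon)
    have hev : ∀ᶠ t in nhdsWithin (0:ℝ) (Set.Ioi 0), u (z + t • (w - z)) ≤ B := by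
      filter_upwards [Ioo_mem_nhdsGT_of_mem (Set.mem_Ico.2 ⟨le_refl (0:ℝ), hs0⟩)] with t ht
      obtain ⟨ht0', hts⟩ := ht
      have hGt := hG.2 (Set.mem_univ z) (Set.mem_univ w)
        (sub_nonneg.2 (le_of_lt (lt_trans hts hs1))) (le_of_lt ht0')
        (by ring : (1 - t) + t = 1)
      have hpt : (1 - t) • z + t • w = z + t • (w - z) := by
        rw [smul_sub, sub_smul, one_smul]; abel
      rw [hpt] at hGt
      simp only [smul_eq_mul] at hGt
      have hnormzw : ‖z - w‖ = d := by rw [hd, norm_sub_rev]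
      rw [hnormzw] at hGt
      have hsub : z + t • (w - z) - z = t • (w - z) := by abel
      have hnorm : ‖z + t • (w - z) - z‖ = t * d := by
        rw [hsub, norm_smul, Real.norm_eq_abs, abs_of_pos ht0', hd]
      have hinner : (inner ℝ v (z + t • (w - z) - z) : ℝ) = t * X := by
        rw [hsub, real_inner_smul_right, hX]
      have htd : (0:ℝ) < t * d := by positivity
      have hN : G (z + t • (w - z)) - G z - t * X
          ≤ t * (G w - G z - X) - (1 - t) * t * (μ / 2 * d ^ 2) := by nlinarith
      have hu1 : u (z + t • (w - z))
          ≤ (t * (G w - G z - X) - (1 - t) * t * (μ / 2 * d ^ 2)) / (t * d) := by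
        rw [hu]
        simp only [hnorm, hinner]
        exact div_le_div_of_nonneg_right hN htd.le |>.trans_eq rfl
      have heq : (t * (G w - G z - X) - (1 - t) * t * (μ / 2 * d ^ 2)) / (t * d)
          = (G w - G z - X) / d - (1 - t) * (μ / 2 * d) := by
        field_simp
      rw [heq] at hu1
      refine hu1.trans ?_
      rw [hB]
      have hpos : 0 < μ / 2 * d := by positivity
      have : (1 - s) * (μ / 2 * d) ≤ (1 - t) * (μ / 2 * d) := by nlinarith
      linarith
    have hfreq : ∃ᶠ x in nhdsWithin z {z}ᶜ, u x ≤ B :=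
      htend.frequently hev.frequently
    have hlim : Filter.liminf u (nhdsWithin z {z}ᶜ) ≤ B :=
      liminf_le_of_frequently_le hfreq hbdd
    have h0 : (0:ℝ) ≤ B := le_trans hv hlim
    linarith [hBc ▸ h0]
  have hmain : μ / 2 * d ≤ (G w - G z - X) / d :=
    aux_le (by positivity) hkey
  rw [le_div_iff₀ hd0] at hmain
  nlinarith [sq_nonneg d]

lemma growth_min {p : ℕ} {G : EuclideanSpace ℝ (Fin p) → ℝ} {μ : ℝ} (hμ : 0 < μ)
    (hG : StrongConvexOn Set.univ μ G) {ystar : EuclideanSpace ℝ (Fin p)}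
    (hmin : ∀ x, G ystar ≤ G x) (w : EuclideanSpace ℝ (Fin p)) :
    G ystar + μ / 2 * ‖w - ystar‖ ^ 2 ≤ G w := by
  have h := aux_le (A := μ / 2 * ‖w - ystar‖ ^ 2) (B := G w - G ystar) (by positivity) ?_
  · linarith
  intro s hs0 hs1
  have hGt := hG.2 (Set.mem_univ ystar) (Set.mem_univ w)
    (sub_nonneg.2 hs1.le) hs0.le (by ring : (1 - s) + s = 1)
  simp only [smul_eq_mul] at hGt
  have hmin' := hmin ((1 - s) • ystar + s • w)
  have hnorm : ‖ystar - w‖ = ‖w - ystar‖ := norm_sub_rev _ _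
  rw [hnorm] at hGt
  nlinarith

/-- For `f` `ρ`-weakly convex, `κ > ρ ≥ 0`, `y*` a minimizer of
`f_κ(·; y)` and `0 < ε ≤ (κ−ρ)/2`: if `v ∈ ∂(f_κ(·; y))(z)` with `‖v‖ ≤ ε‖y* − y‖`,
then `‖v‖ ≤ 2ε‖z − y‖`. -/
theorem small_subgrad_relative_stationarity (p : ℕ) (hp : 0 < p)
    (f : EuclideanSpace ℝ (Fin p) → ℝ) (ρ κ : ℝ) (hρ : 0 ≤ ρ) (hκρ : ρ < κ)
    (hweak : ConvexOn ℝ Set.univ (fun x => f x + ρ / 2 * ‖x‖ ^ 2))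
    (y ystar : EuclideanSpace ℝ (Fin p))
    (hystar : ∀ z, f ystar + κ / 2 * ‖ystar - y‖ ^ 2 ≤ f z + κ / 2 * ‖z - y‖ ^ 2)
    (ε : ℝ) (hε : 0 < ε) (hεle : ε ≤ (κ - ρ) / 2)
    (z v : EuclideanSpace ℝ (Fin p))
    (hv : FSubgradAt (fun x => f x + κ / 2 * ‖x - y‖ ^ 2) v z)
    (hvnorm : ‖v‖ ≤ ε * ‖ystar - y‖) :
    ‖v‖ ≤ 2 * ε * ‖z - y‖ := by
  set G : EuclideanSpace ℝ (Fin p) → ℝ := fun x => f x + κ / 2 * ‖x - y‖ ^ 2 with hGdef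
  set μ : ℝ := κ - ρ with hμdef
  have hμ : 0 < μ := sub_pos.2 hκρ
  -- strong convexity of G
  have hGstrong : StrongConvexOn Set.univ μ G := by
    rw [strongConvexOn_iff_convex]
    have haff : ConvexOn ℝ Set.univ (fun x : EuclideanSpace ℝ (Fin p) =>
        κ / 2 * ‖y‖ ^ 2 - κ * (inner ℝ x y : ℝ)) := by
      refine ⟨convex_univ, fun a _ b _ s t hs ht hst => ?_⟩
      have : (inner ℝ (s • a + t • b) y : ℝ) = s * (inner ℝ a y : ℝ) + t * (inner ℝ b y : ℝ) := by
        rw [inner_add_left, real_inner_smul_left, real_inner_smul_left]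
      simp only [smul_eq_mul]
      rw [this]
      have hE : κ / 2 * ‖y‖ ^ 2 - κ * (s * (inner ℝ a y : ℝ) + t * (inner ℝ b y : ℝ))
          = s * (κ / 2 * ‖y‖ ^ 2 - κ * (inner ℝ a y : ℝ))
            + t * (κ / 2 * ‖y‖ ^ 2 - κ * (inner ℝ b y : ℝ)) := by
        linear_combination (-(κ / 2 * ‖y‖ ^ 2)) * hst
      exact le_of_eq hE
    have heq : (fun x => G x - μ / 2 * ‖x‖ ^ 2)
        = fun x : EuclideanSpace ℝ (Fin p) => (f x + ρ / 2 * ‖x‖ ^ 2)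
          + (κ / 2 * ‖y‖ ^ 2 - κ * (inner ℝ x y : ℝ)) := by
      funext x
      have hexp : ‖x - y‖ ^ 2 = ‖x‖ ^ 2 - 2 * (inner ℝ x y : ℝ) + ‖y‖ ^ 2 :=
        norm_sub_sq_real x y
      rw [hGdef]
      simp only
      rw [hexp, hμdef]
      ring
    rw [heq]
    exact hweak.add haff
  have hmin : ∀ x, G ystar ≤ G x := hystar
  have h1 := key_subgrad hμ hGstrong hv ystar
  have h2 := growth_min hμ hGstrong hmin z
  have hnorm : ‖z - ystar‖ = ‖ystar - z‖ := norm_sub_rev _ _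
  rw [hnorm] at h2
  have hinner : -(‖v‖ * ‖ystar - z‖) ≤ (inner ℝ v (ystar - z) : ℝ) :=
    neg_le_of_neg_le (by
      have := abs_real_inner_le_norm v (ystar - z)
      linarith [neg_abs_le ((inner ℝ v (ystar - z) : ℝ))])
  -- μ * ‖ystar - z‖^2 ≤ ‖v‖ * ‖ystar - z‖
  have hkey : μ * ‖ystar - z‖ ^ 2 ≤ ‖v‖ * ‖ystar - z‖ := by nlinarith
  have hdist : μ * ‖ystar - z‖ ≤ ‖v‖ := by
    rcases eq_or_lt_of_le (norm_nonneg (ystar - z)) with h0 | h0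
    · rw [← h0]; simpa using norm_nonneg v
    · nlinarith [sq_nonneg (‖ystar - z‖)]
  -- ‖ystar - z‖ ≤ ‖ystar - y‖ / 2
  have hhalf : ‖ystar - z‖ ≤ ‖ystar - y‖ / 2 := by nlinarith [norm_nonneg (ystar - y)]
  have htri : ‖ystar - y‖ ≤ ‖ystar - z‖ + ‖z - y‖ := norm_sub_le_norm_sub_add_norm_sub _ _ _
  nlinarith
end

section
/- (Small subgradient implies descent.) Let f : ℝ^p → ℝ be ρ-weakly convex and let κ > ρ ≥ 0. Fix y, z ∈ ℝ^p. If there exists v ∈ ∂(f_κ(·; y))(z) with ‖v‖ ≤ ((κ − ρ)/2)·‖z − y‖, then f_κ(z; y) ≤ f_κ(y; y) = f(y). -/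
open Filter Topology

lemma sq_norm_sub_abs_bound {E : Type*} [NormedAddCommGroup E] (a b : E) (h : ‖a - b‖ ≤ 1) :
    |‖a‖ ^ 2 - ‖b‖ ^ 2| ≤ (2 * ‖b‖ + 1) * ‖a - b‖ := by
  have h1 := abs_norm_sub_norm_le a b
  have h2 : ‖a‖ ≤ ‖b‖ + ‖a - b‖ := norm_le_norm_add_norm_sub' a b
  have h3 : (0:ℝ) ≤ ‖b‖ := norm_nonneg _
  have h4 : (0:ℝ) ≤ ‖a‖ := norm_nonneg _
  have h5 : (0:ℝ) ≤ ‖a - b‖ := norm_nonneg _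
  rw [abs_le] at h1 ⊢
  constructor <;> nlinarith [h1.1, h1.2]

set_option maxHeartbeats 1000000 in
/-- Small subgradient implies descent: for `f` `ρ`-weakly convex and
`κ > ρ ≥ 0`, if `v ∈ ∂(f_κ(·; y))(z)` with `‖v‖ ≤ ((κ−ρ)/2)‖z − y‖`, then
`f_κ(z; y) ≤ f_κ(y; y) = f y`. -/
theorem small_subgrad_implies_descent (p : ℕ) (hp : 0 < p)
    (f : EuclideanSpace ℝ (Fin p) → ℝ) (ρ κ : ℝ) (hρ : 0 ≤ ρ) (hκρ : ρ < κ)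
    (hweak : ConvexOn ℝ Set.univ (fun x => f x + ρ / 2 * ‖x‖ ^ 2))
    (y z : EuclideanSpace ℝ (Fin p))
    (v : EuclideanSpace ℝ (Fin p))
    (hv : FSubgradAt (fun x => f x + κ / 2 * ‖x - y‖ ^ 2) v z)
    (hvnorm : ‖v‖ ≤ (κ - ρ) / 2 * ‖z - y‖) :
    f z + κ / 2 * ‖z - y‖ ^ 2 ≤ f y := by
  rcases eq_or_ne z y with rfl | hzy
  · simp
  have hyz : y - z ≠ 0 := sub_ne_zero.mpr (Ne.symm hzy)
  set s : ℝ := ‖z - y‖ with hs_def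
  have hs : 0 < s := norm_pos_iff.mpr (sub_ne_zero.mpr hzy)
  set g : EuclideanSpace ℝ (Fin p) → ℝ := fun x => f x + κ / 2 * ‖x - y‖ ^ 2 with hg_def
  set q : EuclideanSpace ℝ (Fin p) → ℝ :=
    fun w => (g w - g z - (inner ℝ v (w - z) : ℝ)) / ‖w - z‖ with hq_def
  have hv' : 0 ≤ Filter.liminf q (nhdsWithin z {z}ᶜ) := hv
  set F : EuclideanSpace ℝ (Fin p) → ℝ := fun x => f x + ρ / 2 * ‖x‖ ^ 2 with hF_def
  -- Lower bound for the difference quotient near z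
  obtain ⟨K, tset, htset, hK⟩ := (hweak.locallyLipschitzOn isOpen_univ) (Set.mem_univ z)
  rw [nhdsWithin_univ] at htset
  have hztset : z ∈ tset := mem_of_mem_nhds htset
  set b : ℝ := -((K : ℝ) + ρ / 2 * (2 * ‖z‖ + 1) + κ / 2 * (2 * s + 1) + ‖v‖) with hb_def
  have hlow : ∀ᶠ w in nhdsWithin z {z}ᶜ, b ≤ q w := by
    have h1 : tset ∩ Metric.ball z 1 ∈ 𝓝 z :=
      Filter.inter_mem htset (Metric.ball_mem_nhds z one_pos)
    filter_upwards [eventually_nhdsWithin_of_eventually_nhds h1,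
      eventually_mem_nhdsWithin] with w hw hwz
    have hwz' : w ≠ z := hwz
    have hnp : (0:ℝ) < ‖w - z‖ := norm_pos_iff.mpr (sub_ne_zero.mpr hwz')
    have hwb : ‖w - z‖ ≤ 1 := by
      have := hw.2
      rw [Metric.mem_ball, dist_eq_norm] at this
      linarith
    have hFlip : |F w - F z| ≤ (K : ℝ) * ‖w - z‖ := by
      have := hK.dist_le_mul w hw.1 z hztset
      rwa [Real.dist_eq, dist_eq_norm] at this
    have hcs : |(inner ℝ v (w - z) : ℝ)| ≤ ‖v‖ * ‖w - z‖ := abs_real_inner_le_norm v (w - z)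
    have han1 : |‖w‖ ^ 2 - ‖z‖ ^ 2| ≤ (2 * ‖z‖ + 1) * ‖w - z‖ := sq_norm_sub_abs_bound w z hwb
    have han2 : |‖w - y‖ ^ 2 - ‖z - y‖ ^ 2| ≤ (2 * ‖z - y‖ + 1) * ‖w - z‖ := by
      have he : (w - y) - (z - y) = w - z := by abel
      have := sq_norm_sub_abs_bound (w - y) (z - y) (by rw [he]; exact hwb)
      rwa [he] at this
    have hgdiff : g w - g z =
        (F w - F z) - ρ / 2 * (‖w‖ ^ 2 - ‖z‖ ^ 2) + κ / 2 * (‖w - y‖ ^ 2 - ‖z - y‖ ^ 2) := by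
      simp only [hg_def, hF_def]; ring
    rw [hq_def, le_div_iff₀ hnp]
    rw [abs_le] at hFlip hcs han1 han2
    have hκ0 : (0:ℝ) ≤ κ := le_of_lt (lt_of_le_of_lt hρ hκρ)
    have hb2 : b * ‖w - z‖ ≤ g w - g z - (inner ℝ v (w - z) : ℝ) := by
      rw [hgdiff, hb_def]
      have hρ2 : ρ / 2 * (‖w‖ ^ 2 - ‖z‖ ^ 2) ≤ ρ / 2 * ((2 * ‖z‖ + 1) * ‖w - z‖) := by
        apply mul_le_mul_of_nonneg_left _ (by linarith); linarith [han1.2]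
      have hρ2' : -(ρ / 2 * ((2 * ‖z‖ + 1) * ‖w - z‖)) ≤ ρ / 2 * (‖w‖ ^ 2 - ‖z‖ ^ 2) := by
        rw [neg_le]
        have : -(ρ / 2 * (‖w‖ ^ 2 - ‖z‖ ^ 2)) = ρ / 2 * (-(‖w‖ ^ 2 - ‖z‖ ^ 2)) := by ring
        rw [this]
        apply mul_le_mul_of_nonneg_left _ (by linarith); linarith [han1.1]
      have hκ2' : -(κ / 2 * ((2 * s + 1) * ‖w - z‖)) ≤ κ / 2 * (‖w - y‖ ^ 2 - ‖z - y‖ ^ 2) := by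
        rw [neg_le]
        have : -(κ / 2 * (‖w - y‖ ^ 2 - ‖z - y‖ ^ 2)) = κ / 2 * (-(‖w - y‖ ^ 2 - ‖z - y‖ ^ 2)) := by
          ring
        rw [this]
        apply mul_le_mul_of_nonneg_left _ (by linarith); linarith [han2.1]
      clear_value s F g q b
      linarith [hFlip.1, hcs.2, hρ2, hκ2']
    exact hb2
  have hbdd : (nhdsWithin z {z}ᶜ).IsBoundedUnder (· ≥ ·) q := ⟨b, eventually_map.mpr hlow⟩
  -- the segment filter
  set path : ℝ → EuclideanSpace ℝ (Fin p) := fun t => z + t • (y - z) with hpath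
  have hpath_tendsto : Filter.Tendsto path (nhdsWithin 0 (Set.Ioi 0)) (nhdsWithin z {z}ᶜ) := by
    rw [tendsto_nhdsWithin_iff]
    constructor
    · have hc : Continuous path := by
        simp only [hpath]; fun_prop
      have h0 : path 0 = z := by simp [hpath]
      have := hc.tendsto 0
      rw [h0] at this
      exact this.mono_left nhdsWithin_le_nhds
    · filter_upwards [self_mem_nhdsWithin] with t ht
      simp only [Set.mem_compl_iff, Set.mem_singleton_iff, hpath]
      intro hcon
      have h0 : t • (y - z) = 0 := by
        have := add_eq_left.mp hcon
        exact this
      rcases smul_eq_zero.mp h0 with h | h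
      · rw [h] at ht; exact lt_irrefl (0:ℝ) ht
      · exact hyz h
  set iv : ℝ := (inner ℝ v (y - z) : ℝ) with hiv_def
  set D : ℝ := f y - f z - (2 * κ - ρ) / 2 * s ^ 2 - iv with hD_def
  have hD : 0 ≤ D := by
    have key : ∀ ε : ℝ, 0 < ε → (0:ℝ) ≤ D + ε := by
      intro ε hε
      set X : ℝ := (κ - ρ) / 2 * s ^ 2 with hX_def
      have hX0 : 0 ≤ X := by
        have : (0:ℝ) < κ - ρ := by linarith
        positivity
      set t₀ : ℝ := min 1 (ε / (X + 1)) with ht₀_def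
      have ht₀pos : 0 < t₀ := lt_min one_pos (div_pos hε (by linarith))
      have hev : ∀ᶠ t in nhdsWithin (0:ℝ) (Set.Ioi 0), q (path t) ≤ (D + ε) / s := by
        filter_upwards [Ioc_mem_nhdsGT_of_mem ⟨le_refl (0:ℝ), ht₀pos⟩] with t ht
        obtain ⟨ht0, ht1⟩ := ht
        have ht1' : t ≤ 1 := ht1.trans (min_le_left _ _)
        have htX : t * X ≤ ε := by
          have h' : t ≤ ε / (X + 1) := ht1.trans (min_le_right _ _)
          rw [le_div_iff₀ (by linarith)] at h'
          nlinarith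
        set nz : ℝ := ‖z‖ ^ 2 with hnz
        set ny : ℝ := ‖y‖ ^ 2 with hny
        set ip : ℝ := (inner ℝ z y : ℝ) with hip
        have hwcomb : path t = (1 - t) • z + t • y := by
          simp only [hpath]; module
        have hconv := hweak.2 (Set.mem_univ z) (Set.mem_univ y)
          (by linarith : (0:ℝ) ≤ 1 - t) ht0.le (by ring : (1 - t) + t = 1)
        simp only [hF_def, smul_eq_mul] at hconv
        have e1 : ‖(1 - t) • z + t • y‖ ^ 2
            = (1 - t) ^ 2 * nz + 2 * ((1 - t) * (t * ip)) + t ^ 2 * ny := by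
          rw [norm_add_sq_real, real_inner_smul_left, real_inner_smul_right,
            norm_smul, norm_smul, mul_pow, mul_pow]
          simp only [Real.norm_eq_abs, sq_abs, hnz, hny]
          try ring
        have e2 : s ^ 2 = nz - 2 * ip + ny := norm_sub_sq_real z y
        have e3 : ‖path t - y‖ ^ 2 = (1 - t) ^ 2 * s ^ 2 := by
          have hh : path t - y = (1 - t) • (z - y) := by simp only [hpath]; module
          rw [hh, norm_smul, mul_pow, Real.norm_eq_abs, sq_abs]
        have he4' : path t - z = t • (y - z) := by simp only [hpath]; module
        have e4 : ‖path t - z‖ = t * s := by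
          rw [he4', norm_smul, Real.norm_eq_abs, abs_of_pos ht0, norm_sub_rev y z]
        have e5 : (inner ℝ v (path t - z) : ℝ) = t * iv := by
          rw [he4', real_inner_smul_right, hiv_def]
        have hgw : g (path t) = f (path t) + κ / 2 * ((1 - t) ^ 2 * s ^ 2) := by
          show f (path t) + κ / 2 * ‖path t - y‖ ^ 2 = _
          rw [e3]
        have hgz : g z = f z + κ / 2 * s ^ 2 := rfl
        rw [hq_def]
        simp only []
        rw [e4, e5, hgw, hgz, div_le_div_iff₀ (by positivity) hs]
        -- main numeric inequality
        have hfw : f (path t) + ρ / 2 * ((1 - t) ^ 2 * nz + 2 * ((1 - t) * (t * ip)) + t ^ 2 * ny)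
            ≤ (1 - t) * (f z + ρ / 2 * nz) + t * (f y + ρ / 2 * ny) := by
          rw [e1] at hconv
          rw [← hwcomb] at hconv
          exact hconv
        have hquad : (1 - t) * (f z + ρ / 2 * nz) + t * (f y + ρ / 2 * ny)
              - ρ / 2 * ((1 - t) ^ 2 * nz + 2 * ((1 - t) * (t * ip)) + t ^ 2 * ny)
              + κ / 2 * ((1 - t) ^ 2 * s ^ 2) - (f z + κ / 2 * s ^ 2) - t * iv
            = t * D + t ^ 2 * X := by
          rw [hD_def, hX_def, e2]; ring
        have hnum : f (path t) + κ / 2 * ((1 - t) ^ 2 * s ^ 2) - (f z + κ / 2 * s ^ 2) - t * iv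
            ≤ t * D + t ^ 2 * X := by
          rw [← hquad]; linarith
        have ht2X : t ^ 2 * X ≤ t * ε := by
          have := mul_le_mul_of_nonneg_left htX ht0.le
          calc t ^ 2 * X = t * (t * X) := by ring
            _ ≤ t * ε := this
        have hfin : f (path t) + κ / 2 * ((1 - t) ^ 2 * s ^ 2) - (f z + κ / 2 * s ^ 2) - t * iv
            ≤ (D + ε) * t := by nlinarith
        nlinarith [mul_le_mul_of_nonneg_right hfin hs.le]
      -- chain of liminf inequalities
      have hmap : Filter.map path (nhdsWithin (0:ℝ) (Set.Ioi 0)) ≤ nhdsWithin z {z}ᶜ :=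
        hpath_tendsto
      have hb1 : ∀ᶠ w in Filter.map path (nhdsWithin (0:ℝ) (Set.Ioi 0)), b ≤ q w := hmap hlow
      have hevmap : ∀ᶠ w in Filter.map path (nhdsWithin (0:ℝ) (Set.Ioi 0)),
          q w ≤ (D + ε) / s := eventually_map.mpr hev
      have hcob : (Filter.map path (nhdsWithin (0:ℝ) (Set.Ioi 0))).IsCoboundedUnder
          (· ≥ ·) q := Filter.isCoboundedUnder_ge_of_eventually_le _ hevmap
      have h1 : Filter.liminf q (nhdsWithin z {z}ᶜ)
          ≤ Filter.liminf q (Filter.map path (nhdsWithin (0:ℝ) (Set.Ioi 0))) :=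
        Filter.liminf_le_liminf_of_le hmap hbdd hcob
      have h2 : Filter.liminf q (Filter.map path (nhdsWithin (0:ℝ) (Set.Ioi 0)))
          ≤ (D + ε) / s :=
        Filter.liminf_le_of_frequently_le hevmap.frequently ⟨b, eventually_map.mpr hb1⟩
      have h3 : (0:ℝ) ≤ (D + ε) / s := le_trans hv' (le_trans h1 h2)
      have := (le_div_iff₀ hs).mp h3
      linarith
    exact le_of_forall_pos_le_add key
  -- conclude
  have hcs2 : |iv| ≤ ‖v‖ * s := by
    rw [hiv_def]
    calc |(inner ℝ v (y - z) : ℝ)| ≤ ‖v‖ * ‖y - z‖ := abs_real_inner_le_norm v (y - z)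
      _ = ‖v‖ * s := by rw [norm_sub_rev y z]
  rw [abs_le] at hcs2
  clear_value s g q F path iv D
  rw [hD_def] at hD
  nlinarith [mul_le_mul_of_nonneg_right hvnorm hs.le, hcs2.1]
end

section
/- (Inner complexity when κ > ρ: adaptive stationarity and descent.) Let f_0 : ℝ^p → ℝ be differentiable with L-Lipschitz gradient (L > 0), ψ : ℝ^p → ℝ convex, f = f_0 + ψ, and suppose f is ρ-weakly convex with κ > ρ ≥ 0. Fix y ∈ ℝ^p, let y* be a minimizer of f_κ(·; y), and let z_0 be a minimizer of z ↦ ψ(z) + ((κ+L)/2)‖z − (y − (1/(κ+L))∇f_0(y))‖². Let A > 0 and τ ∈ (0,1), and let (z_t)_{t ≥ 0} be a sequence in ℝ^p such that for every t there exists v_t ∈ ∂(f_κ(·; y))(z_t) with ‖v_t‖² ≤ A(1 − τ)^t·(f_κ(z_0; y) − f_κ(y*; y)). Then for every natural number T with T ≥ (1/τ)·log(8A(L+κ)/(κ−ρ)²), the point z_T satisfies: ‖v_T‖ ≤ κ‖z_T − y‖ and f_κ(z_T; y) ≤ f_κ(y; y) = f(y). -/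
open Filter Topology

section Aux

variable {p : ℕ}
local notation "E" => EuclideanSpace ℝ (Fin p)


lemma smul_norm_sq_ineq (u w : E) {s t : ℝ} (hs : 0 ≤ s) (ht : 0 ≤ t) (hst : s + t = 1) :
    ‖s • u + t • w‖ ^ 2 ≤ s * ‖u‖ ^ 2 + t * ‖w‖ ^ 2 := by
  have h1 : ‖s • u + t • w‖ ≤ s * ‖u‖ + t * ‖w‖ := by
    refine (norm_add_le _ _).trans ?_
    rw [norm_smul, norm_smul, Real.norm_eq_abs, Real.norm_eq_abs,
      abs_of_nonneg hs, abs_of_nonneg ht]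
  nlinarith [mul_self_le_mul_self (norm_nonneg (s • u + t • w)) h1,
    mul_nonneg (mul_nonneg hs ht) (sq_nonneg (‖u‖ - ‖w‖)), norm_nonneg u, norm_nonneg w,
    sq_nonneg (‖u‖ - ‖w‖)]

lemma quad_convex (x : E) {μ : ℝ} (hμ : 0 ≤ μ) :
    ConvexOn ℝ Set.univ (fun w : E => μ / 2 * ‖w - x‖ ^ 2) := by
  refine ⟨convex_univ, fun u _ w _ s t hs ht hst => ?_⟩
  have hx : s • u + t • w - x = s • (u - x) + t • (w - x) := by
    match_scalars <;> linarith
  simp only [smul_eq_mul, hx]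
  have := smul_norm_sq_ineq (u - x) (w - x) hs ht hst
  nlinarith

lemma inner_affine_convex (a : E) (c : ℝ) :
    ConvexOn ℝ Set.univ (fun w : E => (inner ℝ w a : ℝ) + c) := by
  refine ⟨convex_univ, fun u _ w _ s t hs ht hst => ?_⟩
  simp only [smul_eq_mul]
  rw [inner_add_left, real_inner_smul_left, real_inner_smul_left]
  refine le_of_eq ?_
  linear_combination c * hst.symm

lemma convex_shift (f : E → ℝ) (ρ κ : ℝ)
    (hweak : ConvexOn ℝ Set.univ (fun x => f x + ρ / 2 * ‖x‖ ^ 2)) (y x : E) :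
    ConvexOn ℝ Set.univ
      (fun w => (f w + κ / 2 * ‖w - y‖ ^ 2) - (κ - ρ) / 2 * ‖w - x‖ ^ 2) := by
  have heq : (fun w : E => (f w + κ / 2 * ‖w - y‖ ^ 2) - (κ - ρ) / 2 * ‖w - x‖ ^ 2)
      = fun w => (f w + ρ / 2 * ‖w‖ ^ 2) +
        ((inner ℝ w ((κ - ρ) • x - κ • y) : ℝ) + (κ / 2 * ‖y‖ ^ 2 - (κ - ρ) / 2 * ‖x‖ ^ 2)) := by
    funext w
    rw [inner_sub_right, real_inner_smul_right, real_inner_smul_right,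
      norm_sub_sq_real, norm_sub_sq_real]
    ring
  rw [heq]
  exact hweak.add (inner_affine_convex _ _)


lemma min_strong (F h : E → ℝ) (μ : ℝ) (hμ : 0 ≤ μ) (x₀ : E)
    (hFh : ∀ w, F w = h w + μ / 2 * ‖w - x₀‖ ^ 2)
    (hconv : ConvexOn ℝ Set.univ h)
    (hmin : ∀ w, F x₀ ≤ F w) (w : E) :
    F x₀ + μ / 2 * ‖w - x₀‖ ^ 2 ≤ F w := by
  have hx0 : F x₀ = h x₀ := by simp [hFh x₀]
  suffices hsuff : h x₀ ≤ h w by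
    rw [hFh w, hx0]; linarith
  by_contra hlt
  push_neg at hlt
  set δ := h x₀ - h w with hδ
  have hδpos : 0 < δ := by simp [hδ]; linarith
  set q := μ / 2 * ‖w - x₀‖ ^ 2 with hq
  have hqnn : 0 ≤ q := by positivity
  set s := min 1 (δ / (q + 1)) with hs
  have hspos : 0 < s := lt_min one_pos (by positivity)
  have hsle1 : s ≤ 1 := min_le_left _ _
  have hsq : s * q < δ := by
    have h1 : s * (q + 1) ≤ δ := by
      have := min_le_right 1 (δ / (q + 1))
      calc s * (q + 1) ≤ δ / (q + 1) * (q + 1) := by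
            apply mul_le_mul_of_nonneg_right this (by positivity)
        _ = δ := by field_simp
    nlinarith
  have hcomb := hconv.2 (Set.mem_univ x₀) (Set.mem_univ w)
    (by linarith : (0:ℝ) ≤ 1 - s) hspos.le (by ring)
  simp only [smul_eq_mul] at hcomb
  set zs := (1 - s) • x₀ + s • w with hzs
  have hzsx : zs - x₀ = s • (w - x₀) := by
    rw [hzs]; match_scalars <;> ring
  have hnorm : ‖zs - x₀‖ ^ 2 = s ^ 2 * ‖w - x₀‖ ^ 2 := by
    rw [hzsx, norm_smul, Real.norm_eq_abs, abs_of_nonneg hspos.le, mul_pow]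
  have hFzs : F zs ≤ h x₀ - s * δ + s ^ 2 * q := by
    rw [hFh zs, hnorm]
    have : (1 - s) * h x₀ + s * h w = h x₀ - s * δ := by rw [hδ]; ring
    nlinarith [hcomb]
  have : F zs < F x₀ := by
    rw [hx0]
    nlinarith [hsq, hspos, hsle1, hqnn]
  exact absurd (hmin zs) (by linarith)



lemma fsubgrad_strong (F : E → ℝ) (μ : ℝ) (hμ : 0 ≤ μ) (x v : E)
    (hconv : ConvexOn ℝ Set.univ (fun w => F w - μ / 2 * ‖w - x‖ ^ 2))
    (hsub : FSubgradAt F v x) (w : E) :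
    F x + (inner ℝ v (w - x) : ℝ) + μ / 2 * ‖w - x‖ ^ 2 ≤ F w := by
  -- F is convex, hence locally Lipschitz
  have hFc : ConvexOn ℝ Set.univ F := by
    have h2 := hconv.add (quad_convex x hμ)
    have heq : ((fun w : E => F w - μ / 2 * ‖w - x‖ ^ 2) + fun w : E => μ / 2 * ‖w - x‖ ^ 2) = F := by
      funext w; simp only [Pi.add_apply]; ring
    rwa [heq] at h2
  obtain ⟨K, s, hsnhd, hK⟩ := hFc.locallyLipschitz x
  set q : E → ℝ := fun y => (F y - F x - (inner ℝ v (y - x) : ℝ)) / ‖y - x‖ with hqdef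
  have hbdd : Filter.IsBoundedUnder (· ≥ ·) (nhdsWithin x {x}ᶜ) q := by
    refine ⟨-(K + ‖v‖), ?_⟩
    rw [Filter.eventually_map]
    have h1 : ∀ᶠ y in nhdsWithin x {x}ᶜ, y ∈ s :=
      mem_nhdsWithin_of_mem_nhds hsnhd
    have h2 : ∀ᶠ y in nhdsWithin x {x}ᶜ, y ∈ ({x}ᶜ : Set E) := eventually_mem_nhdsWithin
    filter_upwards [h1, h2] with yy hy1 hy2
    have hyx : yy ≠ x := hy2
    have hpos : 0 < ‖yy - x‖ := by
      rw [norm_pos_iff]; exact sub_ne_zero.mpr hyx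
    have hxs : x ∈ s := mem_of_mem_nhds hsnhd
    have hlipb : F x - F yy ≤ K * ‖yy - x‖ := by
      have := hK.dist_le_mul yy hy1 x hxs
      rw [Real.dist_eq, dist_eq_norm] at this
      have := abs_le.mp this
      linarith [this.1]
    have hinner : (inner ℝ v (yy - x) : ℝ) ≤ ‖v‖ * ‖yy - x‖ := real_inner_le_norm v (yy - x)
    rw [hqdef]
    rw [ge_iff_le, le_div_iff₀ hpos]
    nlinarith
  rcases eq_or_ne w x with rfl | hwx
  · simp
  have hu : w - x ≠ 0 := sub_ne_zero.mpr hwx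
  have hupos : 0 < ‖w - x‖ := norm_pos_iff.mpr hu
  by_contra hcon
  push_neg at hcon
  set c : ℝ := (F w - F x - (inner ℝ v (w - x) : ℝ) - μ / 2 * ‖w - x‖ ^ 2) / ‖w - x‖ with hc
  have hcneg : c < 0 := div_neg_of_neg_of_pos (by linarith) hupos
  have hcu : c * ‖w - x‖ = F w - F x - (inner ℝ v (w - x) : ℝ) - μ / 2 * ‖w - x‖ ^ 2 := by
    rw [hc, div_mul_cancel₀]; exact ne_of_gt hupos
  -- key bound along the segment
  have key : ∀ t : ℝ, 0 < t → t ≤ 1 → q (x + t • (w - x)) ≤ c + μ * t * ‖w - x‖ / 2 := by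
    intro t ht0 ht1
    have hcomb := hconv.2 (Set.mem_univ x) (Set.mem_univ w)
      (by linarith : (0:ℝ) ≤ 1 - t) ht0.le (by ring)
    simp only [smul_eq_mul] at hcomb
    have hpt : (1 - t) • x + t • w = x + t • (w - x) := by
      match_scalars <;> ring
    rw [hpt] at hcomb
    have hxx : ‖x - x‖ = 0 := by simp
    have hnorm1 : ‖x + t • (w - x) - x‖ = t * ‖w - x‖ := by
      rw [add_sub_cancel_left, norm_smul, Real.norm_eq_abs, abs_of_pos ht0]
    have hnorm2 : ‖x + t • (w - x) - x‖ ^ 2 = t ^ 2 * ‖w - x‖ ^ 2 := by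
      rw [hnorm1, mul_pow]
    have hinner2 : (inner ℝ v (x + t • (w - x) - x) : ℝ) = t * (inner ℝ v (w - x) : ℝ) := by
      rw [add_sub_cancel_left, real_inner_smul_right]
    have hF2 : F (x + t • (w - x)) - F x - (inner ℝ v (x + t • (w - x) - x) : ℝ)
        ≤ t * (c * ‖w - x‖) + μ / 2 * t ^ 2 * ‖w - x‖ ^ 2 := by
      rw [hinner2, hcu]
      rw [hxx] at hcomb
      nlinarith [hcomb, hnorm2]
    rw [hqdef]
    simp only
    rw [div_le_iff₀ (by rw [hnorm1]; positivity)]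
    rw [hnorm1]
    nlinarith [hF2]
  -- choose small parameter
  set t₀ : ℝ := min 1 (-c / (μ * ‖w - x‖ + 1)) with ht₀
  have ht₀pos : 0 < t₀ := lt_min one_pos (div_pos (by linarith) (by positivity))
  have ht₀le1 : t₀ ≤ 1 := min_le_left _ _
  have ht₀small : μ * t₀ * ‖w - x‖ ≤ -c := by
    have h1 : t₀ ≤ -c / (μ * ‖w - x‖ + 1) := min_le_right _ _
    have h2 : t₀ * (μ * ‖w - x‖ + 1) ≤ -c := by
      calc t₀ * (μ * ‖w - x‖ + 1) ≤ (-c / (μ * ‖w - x‖ + 1)) * (μ * ‖w - x‖ + 1) :=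
            mul_le_mul_of_nonneg_right h1 (by positivity)
        _ = -c := by field_simp
    nlinarith [ht₀pos, mul_nonneg hμ (norm_nonneg (w - x))]
  -- the sequence tending to x within the punctured nbhd
  have htend0 : Filter.Tendsto (fun n : ℕ => t₀ / (n + 1 : ℝ)) atTop (nhds 0) := by
    apply Filter.Tendsto.div_atTop tendsto_const_nhds
    exact tendsto_atTop_add_const_right atTop 1 tendsto_natCast_atTop_atTop
  have htend : Filter.Tendsto (fun n : ℕ => x + (t₀ / (n + 1 : ℝ)) • (w - x)) atTop
      (nhdsWithin x {x}ᶜ) := by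
    rw [tendsto_nhdsWithin_iff]
    constructor
    · have := (htend0.smul_const (w - x)).const_add x
      simpa using this
    · refine Filter.Eventually.of_forall fun n => ?_
      have hn : (0:ℝ) < t₀ / (n + 1 : ℝ) := by positivity
      simp only [Set.mem_compl_iff, Set.mem_singleton_iff]
      intro hcontra
      have : (t₀ / (n + 1 : ℝ)) • (w - x) = 0 := by
        have := congrArg (fun z => z - x) hcontra
        simpa using this
      exact hu (by simpa [smul_eq_zero, ne_of_gt hn] using this)
  have hfreq : ∃ᶠ yy in nhdsWithin x {x}ᶜ, q yy ≤ c / 2 := by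
    apply htend.frequently
    apply Filter.Frequently.of_forall
    intro n
    have hn : (0:ℝ) < t₀ / (n + 1 : ℝ) := by positivity
    have hnle : t₀ / (n + 1 : ℝ) ≤ t₀ := by
      apply div_le_self ht₀pos.le; simp [Nat.cast_nonneg]
    have h1 := key _ hn (le_trans hnle ht₀le1)
    have h2 : μ * (t₀ / (n + 1 : ℝ)) * ‖w - x‖ ≤ -c := by
      refine le_trans ?_ ht₀small
      apply mul_le_mul_of_nonneg_right _ (norm_nonneg _)
      exact mul_le_mul_of_nonneg_left hnle hμ
    linarith
  have hliminf := Filter.liminf_le_of_frequently_le hfreq hbdd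
  have h0 := hsub
  rw [FSubgradAt] at h0
  have : (0:ℝ) ≤ c / 2 := le_trans h0 hliminf
  linarith


lemma descent_lemma (f₀ : E → ℝ) (g : E → E) (L : ℝ) (hL : 0 ≤ L)
    (hgrad : ∀ x, HasGradientAt f₀ (g x) x)
    (hlip : ∀ x y, ‖g x - g y‖ ≤ L * ‖x - y‖) (a b : E) :
    |f₀ b - f₀ a - (inner ℝ (g a) (b - a) : ℝ)| ≤ L / 2 * ‖b - a‖ ^ 2 := by
  set d := b - a with hd
  have hline : ∀ t : ℝ, HasDerivAt (fun t : ℝ => f₀ (a + t • d))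
      ((inner ℝ (g (a + t • d)) d : ℝ)) t := by
    intro t
    have h1 : HasDerivAt (fun t : ℝ => a + t • d) d t := by
      simpa using ((hasDerivAt_id t).smul_const d).const_add a
    have h2 := ((hgrad (a + t • d)).hasFDerivAt.comp_hasDerivAt t h1)
    simpa [InnerProductSpace.toDual_apply_apply, Function.comp_def] using h2
  set C₁ : ℝ := (inner ℝ (g a) d : ℝ) with hC₁
  set C₂ : ℝ := L / 2 * ‖d‖ ^ 2 with hC₂
  -- derivative bound on Ioi 0
  have hib : ∀ t : ℝ, 0 < t → |(inner ℝ (g (a + t • d)) d : ℝ) - C₁| ≤ 2 * t * C₂ := by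
    intro t ht
    rw [hC₁, ← inner_sub_left]
    refine le_trans (abs_real_inner_le_norm _ _) ?_
    have h3 : ‖g (a + t • d) - g a‖ ≤ L * (t * ‖d‖) := by
      have := hlip (a + t • d) a
      simpa [norm_smul, abs_of_pos ht] using this
    calc ‖g (a + t • d) - g a‖ * ‖d‖ ≤ L * (t * ‖d‖) * ‖d‖ :=
          mul_le_mul_of_nonneg_right h3 (norm_nonneg d)
      _ = 2 * t * C₂ := by rw [hC₂]; ring
  -- upper bound: φ antitone
  have hupper : f₀ b - f₀ a - C₁ ≤ C₂ := by
    set φ : ℝ → ℝ := fun t => f₀ (a + t • d) - t * C₁ - t ^ 2 * C₂ with hφ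
    have hdφ : ∀ t : ℝ, HasDerivAt φ
        ((inner ℝ (g (a + t • d)) d : ℝ) - C₁ - 2 * t * C₂) t := by
      intro t
      have h1 := (hline t).sub ((hasDerivAt_mul_const C₁))
      have h2 := (hasDerivAt_pow 2 t).mul_const C₂
      have := h1.sub h2
      exact this.congr_deriv (by norm_num)
    have hanti : AntitoneOn φ (Set.Icc 0 1) := by
      apply antitoneOn_of_hasDerivWithinAt_nonpos (convex_Icc 0 1)
        (fun t _ => (hdφ t).continuousAt.continuousWithinAt)
        (fun t _ => (hdφ t).hasDerivWithinAt)
      intro t ht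
      rw [interior_Icc] at ht
      have := hib t ht.1
      have := abs_le.mp this
      linarith [this.1, this.2]
    have h01 := hanti (Set.mem_Icc.mpr ⟨le_refl 0, zero_le_one⟩)
      (Set.mem_Icc.mpr ⟨zero_le_one, le_refl 1⟩) zero_le_one
    have hφ0 : φ 0 = f₀ a := by simp [hφ]
    have hφ1 : φ 1 = f₀ b - C₁ - C₂ := by simp [hφ, hd]
    rw [hφ0, hφ1] at h01
    linarith
  -- lower bound: ψ monotone
  have hlower : -C₂ ≤ f₀ b - f₀ a - C₁ := by
    set φ : ℝ → ℝ := fun t => f₀ (a + t • d) - t * C₁ + t ^ 2 * C₂ with hφ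
    have hdφ : ∀ t : ℝ, HasDerivAt φ
        ((inner ℝ (g (a + t • d)) d : ℝ) - C₁ + 2 * t * C₂) t := by
      intro t
      have h1 := (hline t).sub ((hasDerivAt_mul_const C₁))
      have h2 := (hasDerivAt_pow 2 t).mul_const C₂
      have := h1.add h2
      exact this.congr_deriv (by norm_num)
    have hmono : MonotoneOn φ (Set.Icc 0 1) := by
      apply monotoneOn_of_hasDerivWithinAt_nonneg (convex_Icc 0 1)
        (fun t _ => (hdφ t).continuousAt.continuousWithinAt)
        (fun t _ => (hdφ t).hasDerivWithinAt)
      intro t ht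
      rw [interior_Icc] at ht
      have := abs_le.mp (hib t ht.1)
      linarith [this.1]
    have h01 := hmono (Set.mem_Icc.mpr ⟨le_refl 0, zero_le_one⟩)
      (Set.mem_Icc.mpr ⟨zero_le_one, le_refl 1⟩) zero_le_one
    have hφ0 : φ 0 = f₀ a := by simp [hφ]
    have hφ1 : φ 1 = f₀ b - C₁ + C₂ := by simp [hφ, hd]
    rw [hφ0, hφ1] at h01
    linarith
  rw [abs_le]
  exact ⟨by linarith, by linarith⟩

lemma stationarity_arith (nv e r d μ κ : ℝ) (hμ : 0 < μ) (hμκ : μ ≤ κ) (hκ : 0 < κ)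
    (hnv : 0 ≤ nv) (hd : 0 ≤ d) (he : 0 ≤ e) (hr : 0 ≤ r)
    (hμe : μ * e ≤ nv) (htri : d ≤ e + r) (hvT2 : nv ^ 2 ≤ μ ^ 2 * d ^ 2 / 8) :
    nv ≤ κ * r := by
  have hsq4 : (μ + κ) ^ 2 ≤ 4 * κ ^ 2 := by nlinarith
  have hstep : nv ^ 2 * (μ + κ) ^ 2 ≤ (μ ^ 2 * d ^ 2 / 8) * (4 * κ ^ 2) :=
    mul_le_mul hvT2 hsq4 (sq_nonneg _) (by positivity)
  have hμκ2 : (nv * (μ + κ)) ^ 2 ≤ (κ * μ * d) ^ 2 := by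
    nlinarith [hstep, sq_nonneg (κ * μ * d)]
  have hnvk : nv * (μ + κ) ≤ κ * μ * d := by
    have h0a : (0:ℝ) ≤ nv * (μ + κ) := by positivity
    have h0b : (0:ℝ) ≤ κ * μ * d := by positivity
    nlinarith [hμκ2, h0a, h0b]
  have hs2 : κ * μ * d ≤ κ * μ * (e + r) := by
    apply mul_le_mul_of_nonneg_left htri (by positivity)
  have hs3 : κ * (μ * e) ≤ κ * nv := mul_le_mul_of_nonneg_left hμe hκ.le
  have hfin : μ * nv ≤ μ * (κ * r) := by nlinarith [hnvk, hs2, hs3]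
  exact le_of_mul_le_mul_left hfin hμ

end Aux

set_option maxHeartbeats 2000000 in
/-- Inner complexity when `κ > ρ`: adaptive stationarity and descent. -/
theorem inner_complexity_adaptive_stationarity_and_descent (p : ℕ) (hp : 0 < p)
    (f₀ ψ : EuclideanSpace ℝ (Fin p) → ℝ)
    (g : EuclideanSpace ℝ (Fin p) → EuclideanSpace ℝ (Fin p))
    (L : ℝ) (hL : 0 < L)
    (hgrad : ∀ x, HasGradientAt f₀ (g x) x)
    (hlip : ∀ x y, ‖g x - g y‖ ≤ L * ‖x - y‖)
    (hψ : ConvexOn ℝ Set.univ ψ)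
    (f : EuclideanSpace ℝ (Fin p) → ℝ) (hf : f = fun x => f₀ x + ψ x)
    (ρ κ : ℝ) (hρ : 0 ≤ ρ) (hκρ : ρ < κ)
    (hweak : ConvexOn ℝ Set.univ (fun x => f x + ρ / 2 * ‖x‖ ^ 2))
    (y : EuclideanSpace ℝ (Fin p))
    (ystar : EuclideanSpace ℝ (Fin p))
    (hystar : ∀ w, f ystar + κ / 2 * ‖ystar - y‖ ^ 2 ≤ f w + κ / 2 * ‖w - y‖ ^ 2)
    (z : ℕ → EuclideanSpace ℝ (Fin p))
    (hz0 : ∀ w, ψ (z 0) + (κ + L) / 2 * ‖z 0 - (y - (1 / (κ + L)) • g y)‖ ^ 2 ≤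
      ψ w + (κ + L) / 2 * ‖w - (y - (1 / (κ + L)) • g y)‖ ^ 2)
    (A τ : ℝ) (hA : 0 < A) (hτ : τ ∈ Set.Ioo (0 : ℝ) 1)
    (v : ℕ → EuclideanSpace ℝ (Fin p))
    (hsub : ∀ t : ℕ, FSubgradAt (fun w => f w + κ / 2 * ‖w - y‖ ^ 2) (v t) (z t))
    (hrate : ∀ t : ℕ, ‖v t‖ ^ 2 ≤ A * (1 - τ) ^ t *
      ((f (z 0) + κ / 2 * ‖z 0 - y‖ ^ 2) - (f ystar + κ / 2 * ‖ystar - y‖ ^ 2))) :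
    ∀ T : ℕ, 1 / τ * Real.log (8 * A * (L + κ) / (κ - ρ) ^ 2) ≤ (T : ℝ) →
      ‖v T‖ ≤ κ * ‖z T - y‖ ∧ f (z T) + κ / 2 * ‖z T - y‖ ^ 2 ≤ f y := by
  intro T hT
  have hκ : 0 < κ := lt_of_le_of_lt hρ hκρ
  have hμ : 0 < κ - ρ := by linarith
  have hshift : ∀ x : EuclideanSpace ℝ (Fin p),
      ConvexOn ℝ Set.univ
        (fun w => (fun w' => f w' + κ / 2 * ‖w' - y‖ ^ 2) w - (κ - ρ) / 2 * ‖w - x‖ ^ 2) := by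
    intro x
    have := convex_shift f ρ κ hweak y x
    convert this using 2
  -- strong subgradient inequality at z T
  have hstar := fsubgrad_strong (fun w => f w + κ / 2 * ‖w - y‖ ^ 2) (κ - ρ) hμ.le
    (z T) (v T) (hshift (z T)) (hsub T)
  -- quadratic growth at the minimizer ystar
  have hsc : ∀ w, (f ystar + κ / 2 * ‖ystar - y‖ ^ 2) + (κ - ρ) / 2 * ‖w - ystar‖ ^ 2 ≤
      f w + κ / 2 * ‖w - y‖ ^ 2 := by
    have h := min_strong (fun w' => f w' + κ / 2 * ‖w' - y‖ ^ 2)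
      (fun w' => (f w' + κ / 2 * ‖w' - y‖ ^ 2) - (κ - ρ) / 2 * ‖w' - ystar‖ ^ 2)
      (κ - ρ) hμ.le ystar (fun w' => by ring) (hshift ystar)
      (fun w' => hystar w')
    intro w
    have := h w
    simpa using this
  -- stationarity estimates
  have hnr : ‖ystar - z T‖ = ‖z T - ystar‖ := norm_sub_rev _ _
  have hib : |(inner ℝ (v T) (ystar - z T) : ℝ)| ≤ ‖v T‖ * ‖z T - ystar‖ := by
    rw [← hnr]; exact abs_real_inner_le_norm _ _
  have h1 := hstar ystar
  have h2 := hsc (z T)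
  rw [hnr] at h1
  have he2 : (κ - ρ) * ‖z T - ystar‖ ^ 2 ≤ ‖v T‖ * ‖z T - ystar‖ := by
    have := (abs_le.mp hib).1
    nlinarith [h1, h2]
  have hμe : (κ - ρ) * ‖z T - ystar‖ ≤ ‖v T‖ := by
    rcases eq_or_lt_of_le (norm_nonneg (z T - ystar)) with h | h
    · rw [← h, mul_zero]; positivity
    · nlinarith [he2, h]
  have hFzT : f (z T) + κ / 2 * ‖z T - y‖ ^ 2 ≤
      (f ystar + κ / 2 * ‖ystar - y‖ ^ 2) + ‖v T‖ ^ 2 / (2 * (κ - ρ)) := by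
    have hkey : ‖v T‖ * ‖z T - ystar‖ - (κ - ρ) / 2 * ‖z T - ystar‖ ^ 2 ≤
        ‖v T‖ ^ 2 / (2 * (κ - ρ)) := by
      rw [le_div_iff₀ (by linarith : (0:ℝ) < 2 * (κ - ρ))]
      nlinarith [sq_nonneg (‖v T‖ - (κ - ρ) * ‖z T - ystar‖)]
    have := (abs_le.mp hib).1
    linarith [h1]
  -- initialization bound
  have hlam : (0:ℝ) < κ + L := by linarith
  have hexp : ∀ w : EuclideanSpace ℝ (Fin p), ‖w - (y - (1 / (κ + L)) • g y)‖ ^ 2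
      = ‖w - y‖ ^ 2 + 2 * (1 / (κ + L)) * (inner ℝ (w - y) (g y) : ℝ)
        + (1 / (κ + L)) ^ 2 * ‖g y‖ ^ 2 := by
    intro w
    have hpt : w - (y - (1 / (κ + L)) • g y) = (w - y) + (1 / (κ + L)) • g y := by
      module
    rw [hpt, norm_add_sq_real, real_inner_smul_right, norm_smul, Real.norm_eq_abs,
      mul_pow, sq_abs]
    ring
  have hz0'' : ψ (z 0) + (κ + L) / 2 * ‖z 0 - y‖ ^ 2 + (inner ℝ (z 0 - y) (g y) : ℝ)
      ≤ ψ ystar + (κ + L) / 2 * ‖ystar - y‖ ^ 2 + (inner ℝ (ystar - y) (g y) : ℝ) := by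
    have h := hz0 ystar
    rw [hexp (z 0), hexp ystar] at h
    have e1 : ∀ X I : ℝ, (κ + L) / 2 * (X + 2 * (1 / (κ + L)) * I
        + (1 / (κ + L)) ^ 2 * ‖g y‖ ^ 2)
        = (κ + L) / 2 * X + I + ‖g y‖ ^ 2 / (2 * (κ + L)) := by
      intro X I; field_simp
    rw [e1, e1] at h
    linarith
  have hup' := (abs_le.mp (descent_lemma f₀ g L hL.le hgrad hlip y (z 0))).2
  have hlo' := (abs_le.mp (descent_lemma f₀ g L hL.le hgrad hlip y ystar)).1
  rw [real_inner_comm] at hup' hlo'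
  have hD : f (z 0) + κ / 2 * ‖z 0 - y‖ ^ 2
      ≤ (f ystar + κ / 2 * ‖ystar - y‖ ^ 2) + L * ‖ystar - y‖ ^ 2 := by
    have h5 : f (z 0) = f₀ (z 0) + ψ (z 0) := by rw [hf]
    have h6 : f ystar = f₀ ystar + ψ ystar := by rw [hf]
    linarith [hz0'', hup', hlo']
  -- exponential rate
  have hCpos : (0:ℝ) < 8 * A * (L + κ) / (κ - ρ) ^ 2 := div_pos (by positivity) (pow_pos hμ 2)
  have hlogC : Real.log (8 * A * (L + κ) / (κ - ρ) ^ 2) ≤ τ * T := by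
    have h := mul_le_mul_of_nonneg_left hT hτ.1.le
    have h' : τ * (1 / τ * Real.log (8 * A * (L + κ) / (κ - ρ) ^ 2))
        = Real.log (8 * A * (L + κ) / (κ - ρ) ^ 2) := by
      rw [← mul_assoc, mul_one_div, div_self (ne_of_gt hτ.1), one_mul]
    linarith [h, h'.le, h'.ge]
  have hpow : (1 - τ) ^ T ≤ Real.exp (-(τ * T)) := by
    have h1 : 1 - τ ≤ Real.exp (-τ) := by
      have := Real.add_one_le_exp (-τ); linarith
    calc (1 - τ) ^ T ≤ (Real.exp (-τ)) ^ T :=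
          pow_le_pow_left₀ (by linarith [hτ.2]) h1 T
      _ = Real.exp (-(τ * T)) := by rw [← Real.exp_nat_mul]; congr 1; ring
  have hexple : Real.exp (-(τ * T)) ≤ (8 * A * (L + κ) / (κ - ρ) ^ 2)⁻¹ := by
    have hinv : (8 * A * (L + κ) / (κ - ρ) ^ 2)⁻¹
        = Real.exp (-Real.log (8 * A * (L + κ) / (κ - ρ) ^ 2)) := by
      rw [Real.exp_neg, Real.exp_log hCpos]
    rw [hinv]
    exact Real.exp_le_exp.mpr (by linarith)
  have hCinv : (8 * A * (L + κ) / (κ - ρ) ^ 2)⁻¹ = (κ - ρ) ^ 2 / (8 * A * (L + κ)) :=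
    inv_div _ _
  have hDnn : 0 ≤ (f (z 0) + κ / 2 * ‖z 0 - y‖ ^ 2)
      - (f ystar + κ / 2 * ‖ystar - y‖ ^ 2) := by
    have := hystar (z 0); linarith
  have hDle : (f (z 0) + κ / 2 * ‖z 0 - y‖ ^ 2)
      - (f ystar + κ / 2 * ‖ystar - y‖ ^ 2) ≤ L * ‖ystar - y‖ ^ 2 := by
    linarith [hD]
  have hvT2 : ‖v T‖ ^ 2 ≤ (κ - ρ) ^ 2 * ‖ystar - y‖ ^ 2 / 8 := by
    calc ‖v T‖ ^ 2 ≤ A * (1 - τ) ^ T *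
        ((f (z 0) + κ / 2 * ‖z 0 - y‖ ^ 2) - (f ystar + κ / 2 * ‖ystar - y‖ ^ 2)) :=
          hrate T
      _ ≤ A * Real.exp (-(τ * T)) *
        ((f (z 0) + κ / 2 * ‖z 0 - y‖ ^ 2) - (f ystar + κ / 2 * ‖ystar - y‖ ^ 2)) :=
          mul_le_mul_of_nonneg_right (mul_le_mul_of_nonneg_left hpow hA.le) hDnn
      _ ≤ A * (8 * A * (L + κ) / (κ - ρ) ^ 2)⁻¹ *
        ((f (z 0) + κ / 2 * ‖z 0 - y‖ ^ 2) - (f ystar + κ / 2 * ‖ystar - y‖ ^ 2)) :=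
          mul_le_mul_of_nonneg_right (mul_le_mul_of_nonneg_left hexple hA.le) hDnn
      _ ≤ A * (8 * A * (L + κ) / (κ - ρ) ^ 2)⁻¹ * (L * ‖ystar - y‖ ^ 2) := by
          apply mul_le_mul_of_nonneg_left hDle
          rw [hCinv]; positivity
      _ = (κ - ρ) ^ 2 * L * ‖ystar - y‖ ^ 2 / (8 * (L + κ)) := by
          rw [hCinv]; field_simp
      _ ≤ (κ - ρ) ^ 2 * ‖ystar - y‖ ^ 2 / 8 := by
          rw [div_le_div_iff₀ (by linarith) (by norm_num)]
          nlinarith [mul_nonneg (sq_nonneg (κ - ρ)) (sq_nonneg ‖ystar - y‖)]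
  constructor
  · -- stationarity
    have htri : ‖ystar - y‖ ≤ ‖z T - ystar‖ + ‖z T - y‖ := by
      calc ‖ystar - y‖ = ‖(ystar - z T) + (z T - y)‖ := by congr 1; abel
        _ ≤ ‖ystar - z T‖ + ‖z T - y‖ := norm_add_le _ _
        _ = ‖z T - ystar‖ + ‖z T - y‖ := by rw [hnr]
    exact stationarity_arith ‖v T‖ ‖z T - ystar‖ ‖z T - y‖ ‖ystar - y‖ (κ - ρ) κ
      hμ (by linarith) hκ (norm_nonneg _) (norm_nonneg _) (norm_nonneg _) (norm_nonneg _)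
      hμe htri hvT2
  · -- descent
    have hy2 := hsc y
    have hyd : ‖y - ystar‖ = ‖ystar - y‖ := norm_sub_rev _ _
    rw [hyd] at hy2
    rw [sub_self, norm_zero] at hy2
    norm_num at hy2
    have hdiv : ‖v T‖ ^ 2 / (2 * (κ - ρ)) ≤
        ((κ - ρ) ^ 2 * ‖ystar - y‖ ^ 2 / 8) / (2 * (κ - ρ)) := by
      gcongr
    have heq2 : ((κ - ρ) ^ 2 * ‖ystar - y‖ ^ 2 / 8) / (2 * (κ - ρ))
        = (κ - ρ) * ‖ystar - y‖ ^ 2 / 16 := by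
      field_simp; ring
    have hmono : (κ - ρ) * ‖ystar - y‖ ^ 2 / 16 ≤ (κ - ρ) / 2 * ‖ystar - y‖ ^ 2 := by
      nlinarith [sq_nonneg ‖ystar - y‖, hμ]
    linarith [hFzT, hdiv, heq2.le, heq2.ge, hy2, hmono]
end

section
/- (Inner complexity when κ > ρ: modified adaptive stationarity.) Let f_0 : ℝ^p → ℝ be differentiable with L-Lipschitz gradient (L > 0), ψ : ℝ^p → ℝ convex, f = f_0 + ψ, and suppose f is ρ-weakly convex with κ > ρ ≥ 0. Fix y ∈ ℝ^p, let y* be a minimizer of f_κ(·; y), and let z_0 be a minimizer of z ↦ ψ(z) + ((κ+L)/2)‖z − (y − (1/(κ+L))∇f_0(y))‖². Let A > 0 and τ ∈ (0,1), and let (z_t)_{t ≥ 0} be a sequence in ℝ^p such that for every t there exists v_t ∈ ∂(f_κ(·; y))(z_t) with ‖v_t‖² ≤ A(1 − τ)^t·(f_κ(z_0; y) − f_κ(y*; y)). Then for every integer k ≥ 1 and every natural number S with S ≥ (1/τ)·log(8A(L+κ)(k+1)²/(κ−ρ)²), the point z_S satisfies ‖v_S‖ ≤ (κ/(k+1))·‖z_S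 − y‖. -/
set_option maxHeartbeats 4000000

open Filter Topology

section Aux
open Set

lemma descent_upper {p : ℕ} (f₀ : EuclideanSpace ℝ (Fin p) → ℝ)
    (g : EuclideanSpace ℝ (Fin p) → EuclideanSpace ℝ (Fin p)) (L : ℝ)
    (hgrad : ∀ x, HasGradientAt f₀ (g x) x)
    (hlip : ∀ x y, ‖g x - g y‖ ≤ L * ‖x - y‖) (x w : EuclideanSpace ℝ (Fin p)) :
    f₀ w ≤ f₀ x + (inner ℝ (g x) (w - x) : ℝ) + L / 2 * ‖w - x‖ ^ 2 := by
  set d := w - x with hd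
  set φ : ℝ → ℝ := fun t => f₀ (x + t • d) - t * (inner ℝ (g x) d : ℝ) - t ^ 2 * (L / 2 * ‖d‖ ^ 2)
    with hφ
  have hline : ∀ t : ℝ, HasDerivAt (fun s : ℝ => x + s • d) d t := by
    intro t
    simpa using ((hasDerivAt_id t).smul_const d).const_add x
  have hD : ∀ t : ℝ, HasDerivAt φ
      ((inner ℝ (g (x + t • d)) d : ℝ) - (inner ℝ (g x) d : ℝ) - t * (L * ‖d‖ ^ 2)) t := by
    intro t
    have h1 : HasDerivAt (fun s : ℝ => f₀ (x + s • d)) ((inner ℝ (g (x + t • d)) d : ℝ)) t := by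
      have := (hgrad (x + t • d)).hasFDerivAt.comp_hasDerivAt t (hline t)
      exact this
    have h2 : HasDerivAt (fun s : ℝ => s * (inner ℝ (g x) d : ℝ)) ((inner ℝ (g x) d : ℝ)) t := by
      simpa using (hasDerivAt_id t).mul_const ((inner ℝ (g x) d : ℝ))
    have h3 : HasDerivAt (fun s : ℝ => s ^ 2 * (L / 2 * ‖d‖ ^ 2)) (t * (L * ‖d‖ ^ 2)) t := by
      have := (hasDerivAt_pow 2 t).mul_const (L / 2 * ‖d‖ ^ 2)
      refine this.congr_deriv ?_
      norm_num
      ring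
    exact (h1.sub h2).sub h3
  have hmono : AntitoneOn φ (Icc (0:ℝ) 1) := by
    apply antitoneOn_of_deriv_nonpos (convex_Icc 0 1)
    · exact fun t _ => (hD t).differentiableAt.continuousAt.continuousWithinAt
    · exact fun t _ => (hD t).differentiableAt.differentiableWithinAt
    · intro t ht
      rw [interior_Icc] at ht
      rw [(hD t).deriv]
      have hb : (inner ℝ (g (x + t • d) - g x) d : ℝ) ≤ t * (L * ‖d‖ ^ 2) := by
        calc (inner ℝ (g (x + t • d) - g x) d : ℝ) ≤ ‖g (x + t • d) - g x‖ * ‖d‖ :=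
              real_inner_le_norm _ _
          _ ≤ (L * ‖(x + t • d) - x‖) * ‖d‖ := by
              gcongr; exact hlip _ _
          _ = t * (L * ‖d‖ ^ 2) := by
              simp [norm_smul, abs_of_pos ht.1]; ring
      rw [inner_sub_left] at hb
      linarith
  have h01 := hmono (by simp : (0:ℝ) ∈ Icc (0:ℝ) 1) (by simp : (1:ℝ) ∈ Icc (0:ℝ) 1) zero_le_one
  simp only [hφ, zero_smul, add_zero, one_smul, zero_mul, sub_zero, zero_pow, one_mul, one_pow,
    ne_eq, OfNat.ofNat_ne_zero, not_false_eq_true] at h01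
  have : x + d = w := by rw [hd]; abel
  rw [this] at h01
  linarith

lemma descent_lower {p : ℕ} (f₀ : EuclideanSpace ℝ (Fin p) → ℝ)
    (g : EuclideanSpace ℝ (Fin p) → EuclideanSpace ℝ (Fin p)) (L : ℝ)
    (hgrad : ∀ x, HasGradientAt f₀ (g x) x)
    (hlip : ∀ x y, ‖g x - g y‖ ≤ L * ‖x - y‖) (x w : EuclideanSpace ℝ (Fin p)) :
    f₀ x + (inner ℝ (g x) (w - x) : ℝ) - L / 2 * ‖w - x‖ ^ 2 ≤ f₀ w := by
  have hg : ∀ x : EuclideanSpace ℝ (Fin p), HasGradientAt (fun y => -f₀ y) (-(g x)) x := by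
    intro x
    rw [hasGradientAt_iff_hasFDerivAt]
    have := (hgrad x).hasFDerivAt.neg
    rw [map_neg]
    exact this
  have hl : ∀ x y : EuclideanSpace ℝ (Fin p), ‖(-(g x)) - (-(g y))‖ ≤ L * ‖x - y‖ := by
    intro a b
    have : (-(g a)) - (-(g b)) = -(g a - g b) := by abel
    rw [this, norm_neg]
    exact hlip a b
  have := descent_upper (fun y => -f₀ y) (fun x => -(g x)) L hg hl x w
  simp only [inner_neg_left] at this
  linarith

lemma convexOn_inner_add_const {p : ℕ} (a : EuclideanSpace ℝ (Fin p)) (c : ℝ) :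
    ConvexOn ℝ Set.univ (fun w : EuclideanSpace ℝ (Fin p) => (inner ℝ w a : ℝ) + c) := by
  refine ⟨convex_univ, fun x _ y _ s t hs ht hst => ?_⟩
  simp only [inner_add_left, real_inner_smul_left, smul_eq_mul]
  have : s * c + t * c = c := by rw [← add_mul, hst, one_mul]
  linarith

lemma quad_min_strong {p : ℕ} (ψ : EuclideanSpace ℝ (Fin p) → ℝ)
    (hψ : ConvexOn ℝ Set.univ ψ) (G y z₀ : EuclideanSpace ℝ (Fin p)) (M : ℝ) (hM : 0 < M)
    (hmin : ∀ w, ψ z₀ + (inner ℝ G (z₀ - y) : ℝ) + M / 2 * ‖z₀ - y‖ ^ 2 ≤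
      ψ w + (inner ℝ G (w - y) : ℝ) + M / 2 * ‖w - y‖ ^ 2)
    (w : EuclideanSpace ℝ (Fin p)) :
    ψ z₀ + (inner ℝ G (z₀ - y) : ℝ) + M / 2 * ‖z₀ - y‖ ^ 2 + M / 2 * ‖w - z₀‖ ^ 2 ≤
      ψ w + (inner ℝ G (w - y) : ℝ) + M / 2 * ‖w - y‖ ^ 2 := by
  obtain ⟨P, hP⟩ : ∃ P' : EuclideanSpace ℝ (Fin p) → ℝ,
      P' = fun u => ψ u + (inner ℝ G (u - y) : ℝ) + M / 2 * ‖u - y‖ ^ 2 := ⟨_, rfl⟩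
  obtain ⟨Q, hQ⟩ : ∃ Q' : EuclideanSpace ℝ (Fin p) → ℝ,
      Q' = fun u => P u - M / 2 * ‖u - z₀‖ ^ 2 := ⟨_, rfl⟩
  have hPe : ∀ u, P u = ψ u + (inner ℝ G (u - y) : ℝ) + M / 2 * ‖u - y‖ ^ 2 := fun u => by
    rw [hP]
  have hQe : ∀ u, Q u = P u - M / 2 * ‖u - z₀‖ ^ 2 := fun u => by rw [hQ]
  have hminP : ∀ u, P z₀ ≤ P u := fun u => by rw [hPe z₀, hPe u]; exact hmin u
  have hQconv : ConvexOn ℝ Set.univ Q := by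
    have hQeq : Q = fun u => ψ u + ((inner ℝ u (G + M • (z₀ - y)) : ℝ) +
        (-(inner ℝ G y : ℝ) + M / 2 * (‖y‖ ^ 2 - ‖z₀‖ ^ 2))) := by
      funext u
      rw [hQe u, hPe u]
      rw [inner_add_right, real_inner_smul_right, inner_sub_right, inner_sub_right,
        norm_sub_sq_real u y, norm_sub_sq_real u z₀, real_inner_comm G u]
      ring
    rw [hQeq]
    exact hψ.add (convexOn_inner_add_const _ _)
  have hkey : ∀ t : ℝ, 0 < t → t ≤ 1 → P z₀ ≤ Q w + M * t * ‖w - z₀‖ ^ 2 / 2 := by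
    intro t ht0 ht1
    have hcomb : (1 - t) • z₀ + t • w = z₀ + t • (w - z₀) := by module
    have hQc : Q (z₀ + t • (w - z₀)) ≤ (1 - t) * Q z₀ + t * Q w := by
      have := hQconv.2 (mem_univ z₀) (mem_univ w) (by linarith : (0:ℝ) ≤ 1 - t) ht0.le
        (by ring : (1 - t) + t = 1)
      rw [hcomb] at this
      simpa [smul_eq_mul] using this
    have hPt : P (z₀ + t • (w - z₀)) = Q (z₀ + t • (w - z₀)) + M / 2 * (t ^ 2 * ‖w - z₀‖ ^ 2) := by
      rw [hQe]
      have : z₀ + t • (w - z₀) - z₀ = t • (w - z₀) := by abel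
      rw [this, norm_smul, Real.norm_eq_abs, mul_pow, sq_abs]
      ring
    have hQz : Q z₀ = P z₀ := by rw [hQe]; simp
    have hPz : P z₀ ≤ Q (z₀ + t • (w - z₀)) + M / 2 * (t ^ 2 * ‖w - z₀‖ ^ 2) := by
      rw [← hPt]; exact hminP _
    rw [hQz] at hQc
    have ht' : t * P z₀ ≤ t * Q w + M / 2 * (t ^ 2 * ‖w - z₀‖ ^ 2) := by nlinarith [hQc, hPz]
    have hmul : t * P z₀ ≤ t * (Q w + M * t * ‖w - z₀‖ ^ 2 / 2) := by
      calc t * P z₀ ≤ t * Q w + M / 2 * (t ^ 2 * ‖w - z₀‖ ^ 2) := ht'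
        _ = t * (Q w + M * t * ‖w - z₀‖ ^ 2 / 2) := by ring
    exact (mul_le_mul_iff_right₀ ht0).1 hmul
  have hfinal : P z₀ ≤ Q w := by
    by_contra hcon
    push_neg at hcon
    obtain ⟨ε, hε⟩ : ∃ e : ℝ, e = P z₀ - Q w := ⟨_, rfl⟩
    have hεpos : 0 < ε := by rw [hε]; linarith
    rcases eq_or_lt_of_le (sq_nonneg ‖w - z₀‖) with h0 | hpos
    · have := hkey 1 one_pos le_rfl
      rw [← h0] at this
      simp at this
      linarith
    · obtain ⟨t, ht⟩ : ∃ t : ℝ, t = min 1 (ε / (M * ‖w - z₀‖ ^ 2)) := ⟨_, rfl⟩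
      have ht0 : 0 < t := by
        rw [ht]; exact lt_min one_pos (div_pos hεpos (by positivity))
      have ht1 : t ≤ 1 := by rw [ht]; exact min_le_left _ _
      have hthis := hkey t ht0 ht1
      have htb : t ≤ ε / (M * ‖w - z₀‖ ^ 2) := by rw [ht]; exact min_le_right _ _
      have h2 : M * t * ‖w - z₀‖ ^ 2 ≤ ε := by
        have h3 := mul_le_mul_of_nonneg_right
          (mul_le_mul_of_nonneg_left htb hM.le) (sq_nonneg ‖w - z₀‖)
        have h4 : M * (ε / (M * ‖w - z₀‖ ^ 2)) * ‖w - z₀‖ ^ 2 = ε := by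
          have hn : ‖w - z₀‖ ≠ 0 := by intro h0; rw [h0] at hpos; simp at hpos
          field_simp
        linarith
      rw [hε] at h2
      linarith
  have hQw : Q w = P w - M / 2 * ‖w - z₀‖ ^ 2 := hQe w
  rw [hQw] at hfinal
  rw [hPe z₀, hPe w] at hfinal
  linarith

lemma fsub_strong {p : ℕ} (h : EuclideanSpace ℝ (Fin p) → ℝ) (μ : ℝ) (hμ : 0 ≤ μ)
    (hc : ConvexOn ℝ Set.univ (fun w => h w - μ / 2 * ‖w‖ ^ 2))
    (v x : EuclideanSpace ℝ (Fin p)) (hs : FSubgradAt h v x)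
    (w : EuclideanSpace ℝ (Fin p)) :
    h x + (inner ℝ v (w - x) : ℝ) + μ / 2 * ‖w - x‖ ^ 2 ≤ h w := by
  by_contra hlt
  push_neg at hlt
  rcases eq_or_ne w x with rfl | hwx
  · simp at hlt
  set G : EuclideanSpace ℝ (Fin p) → ℝ := fun w => h w - μ / 2 * ‖w‖ ^ 2 with hG
  set d := w - x with hd
  have hw : w = x + d := by rw [hd]; abel
  have hdne : d ≠ 0 := sub_ne_zero.2 hwx
  have hnd : 0 < ‖d‖ := norm_pos_iff.2 hdne
  set δ := (h x + (inner ℝ v d : ℝ) + μ / 2 * ‖d‖ ^ 2 - h w) / ‖d‖ with hδ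
  have hδpos : 0 < δ := div_pos (by linarith) hnd
  have hδd : δ * ‖d‖ = h x + (inner ℝ v d : ℝ) + μ / 2 * ‖d‖ ^ 2 - h w := by
    rw [hδ]; field_simp
  set q : EuclideanSpace ℝ (Fin p) → ℝ :=
    fun y' => (h y' - h x - (inner ℝ v (y' - x) : ℝ)) / ‖y' - x‖ with hq
  -- segment bound
  have hseg : ∀ t : ℝ, 0 < t → t ≤ 1 → q (x + t • d) ≤ -δ + t * (μ * ‖d‖) / 2 := by
    intro t ht0 ht1
    have hcomb : (1 - t) • x + t • w = x + t • d := by rw [hw]; module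
    have hconv : G (x + t • d) ≤ (1 - t) * G x + t * G w := by
      have := hc.2 (mem_univ x) (mem_univ w) (by linarith : (0:ℝ) ≤ 1 - t) ht0.le (by ring)
      simpa [hcomb, smul_eq_mul] using this
    have e1 : ‖x + t • d‖ ^ 2 = ‖x‖ ^ 2 + 2 * (t * (inner ℝ x d : ℝ)) + t ^ 2 * ‖d‖ ^ 2 := by
      rw [norm_add_sq_real, real_inner_smul_right, norm_smul]
      simp [abs_of_pos ht0]
      ring
    have e2 : ‖w‖ ^ 2 = ‖x‖ ^ 2 + 2 * (inner ℝ x d : ℝ) + ‖d‖ ^ 2 := by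
      rw [hw, norm_add_sq_real]
    have hnum : h (x + t • d) - h x - t * (inner ℝ v d : ℝ)
        ≤ t * (-(δ * ‖d‖)) + μ * t ^ 2 * ‖d‖ ^ 2 / 2 := by
      have hGx : G (x + t • d) = h (x + t • d) - μ / 2 * ‖x + t • d‖ ^ 2 := rfl
      have hG1 : G x = h x - μ / 2 * ‖x‖ ^ 2 := rfl
      have hG2 : G w = h w - μ / 2 * ‖w‖ ^ 2 := rfl
      rw [hGx, hG1, hG2, e1, e2] at hconv
      rw [hδd]
      nlinarith [hconv]
    have hxt : (x + t • d) - x = t • d := by abel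
    have hnrm : ‖(x + t • d) - x‖ = t * ‖d‖ := by
      rw [hxt, norm_smul]; simp [abs_of_pos ht0]
    have hin : (inner ℝ v ((x + t • d) - x) : ℝ) = t * (inner ℝ v d : ℝ) := by
      rw [hxt, real_inner_smul_right]
    have hqd : q (x + t • d) = (h (x + t • d) - h x - t * (inner ℝ v d : ℝ)) / (t * ‖d‖) := by
      rw [hq]; simp only []; rw [hnrm, hin]
    rw [hqd, div_le_iff₀ (by positivity)]
    calc h (x + t • d) - h x - t * (inner ℝ v d : ℝ)
        ≤ t * (-(δ * ‖d‖)) + μ * t ^ 2 * ‖d‖ ^ 2 / 2 := hnum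
      _ = (-δ + t * (μ * ‖d‖) / 2) * (t * ‖d‖) := by ring
  -- the set of eventual lower bounds
  unfold FSubgradAt at hs
  rw [Filter.liminf_eq] at hs
  set Sset := {a : ℝ | ∀ᶠ y in nhdsWithin x {x}ᶜ,
      a ≤ (h y - h x - (inner ℝ v (y - x) : ℝ)) / ‖y - x‖} with hSset
  -- nonempty
  have hll : LocallyLipschitz G := hc.locallyLipschitz
  obtain ⟨K, s, hsnhds, hKlip⟩ := hll x
  obtain ⟨r, hr, hball⟩ := Metric.mem_nhds_iff.1 hsnhds
  have hxmem : x ∈ s := hball (Metric.mem_ball_self hr)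
  have hne : Sset.Nonempty := by
    refine ⟨-((K : ℝ) + μ * (2 * ‖x‖ + r) / 2 + ‖v‖), ?_⟩
    have h1 : ∀ᶠ y in nhdsWithin x {x}ᶜ, y ∈ Metric.ball x r :=
      mem_nhdsWithin_of_mem_nhds (Metric.ball_mem_nhds x hr)
    have h2 : ∀ᶠ y in nhdsWithin x {x}ᶜ, y ∈ ({x}ᶜ : Set (EuclideanSpace ℝ (Fin p))) :=
      self_mem_nhdsWithin
    filter_upwards [h1, h2] with y hy1 hy2
    have hyx : y ≠ x := hy2
    have hpos : 0 < ‖y - x‖ := by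
      rw [norm_pos_iff, sub_ne_zero]; exact hyx
    have hGlip : |G y - G x| ≤ (K : ℝ) * ‖y - x‖ := by
      have := hKlip.dist_le_mul y (hball hy1) x hxmem
      rwa [Real.dist_eq, dist_eq_norm] at this
    have hg1 : -((K : ℝ) * ‖y - x‖) ≤ G y - G x := neg_le_of_abs_le hGlip
    have hip : |(inner ℝ v (y - x) : ℝ)| ≤ ‖v‖ * ‖y - x‖ := abs_real_inner_le_norm v (y - x)
    have hyb : ‖y - x‖ < r := by
      have := hy1; rwa [Metric.mem_ball, dist_eq_norm] at this
    have hnormy : ‖y‖ ≤ ‖x‖ + r := by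
      have : ‖y‖ ≤ ‖y - x‖ + ‖x‖ := by
        simpa using norm_add_le (y - x) x
      linarith
    have hid : ‖y‖ ^ 2 - ‖x‖ ^ 2 = (inner ℝ (y + x) (y - x) : ℝ) := by
      rw [inner_add_left, inner_sub_right, inner_sub_right, real_inner_self_eq_norm_sq,
        real_inner_self_eq_norm_sq, real_inner_comm x y]
      ring
    have hid2 : -((2 * ‖x‖ + r) * ‖y - x‖) ≤ ‖y‖ ^ 2 - ‖x‖ ^ 2 := by
      rw [hid]
      have hb : |(inner ℝ (y + x) (y - x) : ℝ)| ≤ ‖y + x‖ * ‖y - x‖ := abs_real_inner_le_norm _ _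
      have hyx2 : ‖y + x‖ ≤ 2 * ‖x‖ + r := by
        have := norm_add_le y x
        linarith
      have h0 := neg_le_of_abs_le hb
      have hmm := mul_le_mul_of_nonneg_right hyx2 (norm_nonneg (y - x))
      linarith
    have hnum2 : -(((K : ℝ) + μ * (2 * ‖x‖ + r) / 2 + ‖v‖) * ‖y - x‖)
        ≤ h y - h x - (inner ℝ v (y - x) : ℝ) := by
      have hgy : h y = G y + μ / 2 * ‖y‖ ^ 2 := by rw [hG]; ring
      have hgx : h x = G x + μ / 2 * ‖x‖ ^ 2 := by rw [hG]; ring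
      have h2' : -(μ / 2 * ((2 * ‖x‖ + r) * ‖y - x‖)) ≤ μ / 2 * (‖y‖ ^ 2 - ‖x‖ ^ 2) := by
        have := mul_le_mul_of_nonneg_left hid2 (by linarith : (0:ℝ) ≤ μ / 2)
        linarith [this]
      have h3' := le_of_abs_le hip
      rw [hgy, hgx]
      calc -(((K : ℝ) + μ * (2 * ‖x‖ + r) / 2 + ‖v‖) * ‖y - x‖)
          = -((K : ℝ) * ‖y - x‖) + -(μ / 2 * ((2 * ‖x‖ + r) * ‖y - x‖)) +
            -(‖v‖ * ‖y - x‖) := by ring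
        _ ≤ (G y - G x) + μ / 2 * (‖y‖ ^ 2 - ‖x‖ ^ 2) + -(inner ℝ v (y - x) : ℝ) :=
            add_le_add (add_le_add hg1 h2') (neg_le_neg h3')
        _ = G y + μ / 2 * ‖y‖ ^ 2 - (G x + μ / 2 * ‖x‖ ^ 2) - (inner ℝ v (y - x) : ℝ) := by
            ring
    rw [le_div_iff₀ hpos]
    linarith [hnum2]
  -- every member is ≤ -δ/2
  have hub : ∀ a ∈ Sset, a ≤ -δ / 2 := by
    intro a ha
    rw [hSset, mem_setOf_eq, eventually_nhdsWithin_iff, Metric.eventually_nhds_iff] at ha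
    obtain ⟨ε, hε, hεa⟩ := ha
    set t := min (min 1 (δ / (μ * ‖d‖ + 1))) (ε / (2 * ‖d‖)) with htdef
    have hdenpos : 0 < μ * ‖d‖ + 1 := by positivity
    have ht0 : 0 < t := by
      apply lt_min (lt_min one_pos (div_pos hδpos hdenpos)) (by positivity)
    have ht1 : t ≤ 1 := le_trans (min_le_left _ _) (min_le_left _ _)
    have htδ : t ≤ δ / (μ * ‖d‖ + 1) := le_trans (min_le_left _ _) (min_le_right _ _)
    have htε : t ≤ ε / (2 * ‖d‖) := min_le_right _ _
    set y := x + t • d with hy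
    have hyx : y ≠ x := by
      rw [hy]
      simp only [ne_eq, add_eq_left]
      exact smul_ne_zero ht0.ne' hdne
    have hdist : dist y x < ε := by
      rw [dist_eq_norm, hy]
      have : x + t • d - x = t • d := by abel
      rw [this, norm_smul, Real.norm_eq_abs, abs_of_pos ht0]
      have : t * ‖d‖ ≤ ε / 2 := by
        have := mul_le_mul_of_nonneg_right htε (norm_nonneg d)
        calc t * ‖d‖ ≤ ε / (2 * ‖d‖) * ‖d‖ := this
          _ = ε / 2 := by field_simp
      linarith
    have haq : a ≤ q y := hεa hdist hyx
    have hqb : q y ≤ -δ + t * (μ * ‖d‖) / 2 := hseg t ht0 ht1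
    have hsmall : t * (μ * ‖d‖) ≤ δ := by
      calc t * (μ * ‖d‖) ≤ δ / (μ * ‖d‖ + 1) * (μ * ‖d‖) :=
            mul_le_mul_of_nonneg_right htδ (by positivity)
        _ ≤ δ := by
            rw [div_mul_eq_mul_div, div_le_iff₀ hdenpos]
            nlinarith [hδpos]
    linarith
  have hsup : sSup Sset ≤ -δ / 2 := csSup_le hne hub
  linarith [hs, hsup, hδpos]

end Aux

/-- Inner complexity when `κ > ρ`: modified adaptive stationarity. -/
theorem inner_complexity_modified_adaptive_stationarity (p : ℕ) (hp : 0 < p)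
    (f₀ ψ : EuclideanSpace ℝ (Fin p) → ℝ)
    (g : EuclideanSpace ℝ (Fin p) → EuclideanSpace ℝ (Fin p))
    (L : ℝ) (hL : 0 < L)
    (hgrad : ∀ x, HasGradientAt f₀ (g x) x)
    (hlip : ∀ x y, ‖g x - g y‖ ≤ L * ‖x - y‖)
    (hψ : ConvexOn ℝ Set.univ ψ)
    (f : EuclideanSpace ℝ (Fin p) → ℝ) (hf : f = fun x => f₀ x + ψ x)
    (ρ κ : ℝ) (hρ : 0 ≤ ρ) (hκρ : ρ < κ)
    (hweak : ConvexOn ℝ Set.univ (fun x => f x + ρ / 2 * ‖x‖ ^ 2))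
    (y : EuclideanSpace ℝ (Fin p))
    (ystar : EuclideanSpace ℝ (Fin p))
    (hystar : ∀ w, f ystar + κ / 2 * ‖ystar - y‖ ^ 2 ≤ f w + κ / 2 * ‖w - y‖ ^ 2)
    (z : ℕ → EuclideanSpace ℝ (Fin p))
    (hz0 : ∀ w, ψ (z 0) + (κ + L) / 2 * ‖z 0 - (y - (1 / (κ + L)) • g y)‖ ^ 2 ≤
      ψ w + (κ + L) / 2 * ‖w - (y - (1 / (κ + L)) • g y)‖ ^ 2)
    (A τ : ℝ) (hA : 0 < A) (hτ : τ ∈ Set.Ioo (0 : ℝ) 1)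
    (v : ℕ → EuclideanSpace ℝ (Fin p))
    (hsub : ∀ t : ℕ, FSubgradAt (fun w => f w + κ / 2 * ‖w - y‖ ^ 2) (v t) (z t))
    (hrate : ∀ t : ℕ, ‖v t‖ ^ 2 ≤ A * (1 - τ) ^ t *
      ((f (z 0) + κ / 2 * ‖z 0 - y‖ ^ 2) - (f ystar + κ / 2 * ‖ystar - y‖ ^ 2))) :
    ∀ k : ℕ, 1 ≤ k → ∀ S : ℕ,
      1 / τ * Real.log (8 * A * (L + κ) * ((k : ℝ) + 1) ^ 2 / (κ - ρ) ^ 2) ≤ (S : ℝ) →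
        ‖v S‖ ≤ κ / ((k : ℝ) + 1) * ‖z S - y‖ := by
  intro k hk S hS
  obtain ⟨hτ0, hτ1⟩ := hτ
  have hκ : 0 < κ := lt_of_le_of_lt hρ hκρ
  have hμ : 0 < κ - ρ := by linarith
  have hM : 0 < κ + L := by linarith
  have hK1 : (1:ℝ) ≤ (k:ℝ) := by exact_mod_cast hk
  have hK2 : (2:ℝ) ≤ (k:ℝ) + 1 := by linarith
  have hKpos : (0:ℝ) < (k:ℝ) + 1 := by linarith
  have hfw : ∀ w, f w = f₀ w + ψ w := fun w => by rw [hf]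
  -- exponential decay bound
  have harg : (0:ℝ) < 8 * A * (L + κ) * ((k:ℝ) + 1) ^ 2 / (κ - ρ) ^ 2 := by positivity
  have hlog : Real.log (8 * A * (L + κ) * ((k:ℝ) + 1) ^ 2 / (κ - ρ) ^ 2) ≤ τ * S := by
    have h := mul_le_mul_of_nonneg_left hS hτ0.le
    rw [← mul_assoc, mul_one_div, div_self hτ0.ne', one_mul] at h
    exact h
  have hexp : 8 * A * (L + κ) * ((k:ℝ) + 1) ^ 2 / (κ - ρ) ^ 2 ≤ Real.exp (τ * S) := by
    calc 8 * A * (L + κ) * ((k:ℝ) + 1) ^ 2 / (κ - ρ) ^ 2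
        = Real.exp (Real.log (8 * A * (L + κ) * ((k:ℝ) + 1) ^ 2 / (κ - ρ) ^ 2)) :=
          (Real.exp_log harg).symm
      _ ≤ Real.exp (τ * S) := Real.exp_le_exp.2 hlog
  have hpow : (1 - τ) ^ S ≤ (κ - ρ) ^ 2 / (8 * A * (L + κ) * ((k:ℝ) + 1) ^ 2) := by
    have h1 : (1 - τ) ^ S ≤ Real.exp (-τ) ^ S :=
      pow_le_pow_left₀ (by linarith) (by linarith [Real.add_one_le_exp (-τ)]) S
    have h2 : Real.exp (-τ) ^ S = Real.exp (-(τ * S)) := by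
      rw [← Real.exp_nat_mul]
      congr 1
      ring
    have h3 : Real.exp (-(τ * S)) = (Real.exp (τ * S))⁻¹ := Real.exp_neg _
    have h4 : (Real.exp (τ * S))⁻¹ ≤ (8 * A * (L + κ) * ((k:ℝ) + 1) ^ 2 / (κ - ρ) ^ 2)⁻¹ :=
      inv_anti₀ harg hexp
    have h5 : (8 * A * (L + κ) * ((k:ℝ) + 1) ^ 2 / (κ - ρ) ^ 2)⁻¹
        = (κ - ρ) ^ 2 / (8 * A * (L + κ) * ((k:ℝ) + 1) ^ 2) := inv_div _ _
    rw [h5] at h4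
    calc (1 - τ) ^ S ≤ Real.exp (-τ) ^ S := h1
      _ = Real.exp (-(τ * S)) := h2
      _ = (Real.exp (τ * S))⁻¹ := h3
      _ ≤ (κ - ρ) ^ 2 / (8 * A * (L + κ) * ((k:ℝ) + 1) ^ 2) := h4
  have hΔ0 : 0 ≤ (f (z 0) + κ / 2 * ‖z 0 - y‖ ^ 2) - (f ystar + κ / 2 * ‖ystar - y‖ ^ 2) := by
    linarith [hystar (z 0)]
  -- prox subproblem minimality in P-form
  have hPmin : ∀ w, ψ (z 0) + (inner ℝ (g y) (z 0 - y) : ℝ) + (κ + L) / 2 * ‖z 0 - y‖ ^ 2 ≤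
      ψ w + (inner ℝ (g y) (w - y) : ℝ) + (κ + L) / 2 * ‖w - y‖ ^ 2 := by
    have e : ∀ u : EuclideanSpace ℝ (Fin p),
        (κ + L) / 2 * ‖u - (y - (1 / (κ + L)) • g y)‖ ^ 2 =
        (inner ℝ (g y) (u - y) : ℝ) + (κ + L) / 2 * ‖u - y‖ ^ 2 + ‖g y‖ ^ 2 / (2 * (κ + L)) := by
      intro u
      have hrw : u - (y - (1 / (κ + L)) • g y) = (u - y) + (1 / (κ + L)) • g y := by abel
      rw [hrw, norm_add_sq_real, real_inner_smul_right, norm_smul, Real.norm_eq_abs,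
        real_inner_comm, mul_pow, sq_abs]
      field_simp
      ring
    intro w
    have h := hz0 w
    rw [e (z 0), e w] at h
    linarith
  have hstrong := quad_min_strong ψ hψ (g y) y (z 0) (κ + L) hM hPmin ystar
  have hupper := descent_upper f₀ g L hgrad hlip y (z 0)
  have hlower := descent_lower f₀ g L hgrad hlip y ystar
  -- gap bound
  have hΔ : (f (z 0) + κ / 2 * ‖z 0 - y‖ ^ 2) - (f ystar + κ / 2 * ‖ystar - y‖ ^ 2) ≤
      (L + κ) * ‖ystar - y‖ ^ 2 := by
    rw [hfw (z 0), hfw ystar]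
    have hsq := sq_nonneg ‖ystar - z 0‖
    have hp1 : 0 ≤ κ * ‖ystar - y‖ ^ 2 := mul_nonneg hκ.le (sq_nonneg _)
    have hp2 : 0 ≤ (κ + L) * ‖ystar - z 0‖ ^ 2 := mul_nonneg hM.le hsq
    linarith [hupper, hlower, hstrong, hp1, hp2]
  -- rate at S
  have hrS := hrate S
  have hr2 : ‖v S‖ ^ 2 ≤ (κ - ρ) ^ 2 * ‖ystar - y‖ ^ 2 / (8 * ((k:ℝ) + 1) ^ 2) := by
    have t1 : (1 - τ) ^ S *
        ((f (z 0) + κ / 2 * ‖z 0 - y‖ ^ 2) - (f ystar + κ / 2 * ‖ystar - y‖ ^ 2)) ≤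
        ((κ - ρ) ^ 2 / (8 * A * (L + κ) * ((k:ℝ) + 1) ^ 2)) * ((L + κ) * ‖ystar - y‖ ^ 2) :=
      mul_le_mul hpow hΔ hΔ0 (by positivity)
    have t2 := mul_le_mul_of_nonneg_left t1 hA.le
    have t3 : A * (((κ - ρ) ^ 2 / (8 * A * (L + κ) * ((k:ℝ) + 1) ^ 2)) *
        ((L + κ) * ‖ystar - y‖ ^ 2)) = (κ - ρ) ^ 2 * ‖ystar - y‖ ^ 2 / (8 * ((k:ℝ) + 1) ^ 2) := by
      field_simp
    linarith [hrS, t2, t3]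
  -- norm bound
  have hBr : ‖v S‖ ≤ (κ - ρ) * ‖ystar - y‖ / (2 * ((k:ℝ) + 1)) := by
    have h1 : ‖v S‖ ^ 2 ≤ ((κ - ρ) * ‖ystar - y‖ / (2 * ((k:ℝ) + 1))) ^ 2 := by
      rw [div_pow]
      have e2 : (κ - ρ) ^ 2 * ‖ystar - y‖ ^ 2 / (8 * ((k:ℝ) + 1) ^ 2) ≤
          ((κ - ρ) * ‖ystar - y‖) ^ 2 / ((2 * ((k:ℝ) + 1)) ^ 2) := by
        rw [div_le_div_iff₀ (by positivity) (by positivity)]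
        have h0 : 0 ≤ (κ - ρ) ^ 2 * ‖ystar - y‖ ^ 2 * ((k:ℝ) + 1) ^ 2 := by positivity
        nlinarith [h0]
      linarith [hr2, e2]
    have h0 : (0:ℝ) ≤ (κ - ρ) * ‖ystar - y‖ / (2 * ((k:ℝ) + 1)) := by positivity
    have := Real.sqrt_le_sqrt h1
    rwa [Real.sqrt_sq (norm_nonneg _), Real.sqrt_sq h0] at this
  -- strong convexity subgradient inequality at z S
  have hcF : ConvexOn ℝ Set.univ
      (fun w : EuclideanSpace ℝ (Fin p) =>
        (f w + κ / 2 * ‖w - y‖ ^ 2) - (κ - ρ) / 2 * ‖w‖ ^ 2) := by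
    have heq : (fun w : EuclideanSpace ℝ (Fin p) =>
        (f w + κ / 2 * ‖w - y‖ ^ 2) - (κ - ρ) / 2 * ‖w‖ ^ 2)
        = fun w => (f w + ρ / 2 * ‖w‖ ^ 2) + ((inner ℝ w (-(κ • y)) : ℝ) + κ / 2 * ‖y‖ ^ 2) := by
      funext u
      rw [norm_sub_sq_real u y, inner_neg_right, real_inner_smul_right]
      ring
    rw [heq]
    exact hweak.add (convexOn_inner_add_const _ _)
  have hsubS := fsub_strong (fun w => f w + κ / 2 * ‖w - y‖ ^ 2) (κ - ρ) hμ.le hcF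
    (v S) (z S) (hsub S) ystar
  have hmin2 := hystar (z S)
  have hs2B : (κ - ρ) * ‖ystar - z S‖ ≤ 2 * ‖v S‖ := by
    have hrw : (inner ℝ (v S) (ystar - z S) : ℝ) = -(inner ℝ (v S) (z S - ystar) : ℝ) := by
      rw [show ystar - z S = -(z S - ystar) by abel, inner_neg_right]
    have h1 : (κ - ρ) / 2 * ‖ystar - z S‖ ^ 2 ≤ (inner ℝ (v S) (z S - ystar) : ℝ) := by
      rw [hrw] at hsubS
      linarith [hsubS, hmin2]
    have h2 : (inner ℝ (v S) (z S - ystar) : ℝ) ≤ ‖v S‖ * ‖ystar - z S‖ := by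
      have := le_of_abs_le (abs_real_inner_le_norm (v S) (z S - ystar))
      rwa [norm_sub_rev (z S) ystar] at this
    rcases eq_or_lt_of_le (norm_nonneg (ystar - z S)) with h0 | hpos'
    · rw [← h0]
      simp
    · have h3 : (κ - ρ) / 2 * ‖ystar - z S‖ ^ 2 ≤ ‖v S‖ * ‖ystar - z S‖ := le_trans h1 h2
      have h4 : ((κ - ρ) / 2 * ‖ystar - z S‖) * ‖ystar - z S‖ ≤ ‖v S‖ * ‖ystar - z S‖ := by
        calc ((κ - ρ) / 2 * ‖ystar - z S‖) * ‖ystar - z S‖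
            = (κ - ρ) / 2 * ‖ystar - z S‖ ^ 2 := by ring
          _ ≤ ‖v S‖ * ‖ystar - z S‖ := h3
      have h5 := le_of_mul_le_mul_right h4 hpos'
      linarith
  -- triangle inequality
  have htri : ‖ystar - y‖ ≤ ‖ystar - z S‖ + ‖z S - y‖ := by
    have hrw : ystar - y = (ystar - z S) + (z S - y) := by abel
    rw [hrw]
    exact norm_add_le _ _
  -- final assembly
  rw [div_mul_eq_mul_div, le_div_iff₀ hKpos]
  have h2B : 2 * ‖v S‖ ≤ (κ - ρ) * ‖ystar - y‖ / ((k:ℝ) + 1) := by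
    have e : (κ - ρ) * ‖ystar - y‖ / (2 * ((k:ℝ) + 1)) * 2
        = (κ - ρ) * ‖ystar - y‖ / ((k:ℝ) + 1) := by
      field_simp
    linarith [hBr]
  have hst : (κ - ρ) * ‖ystar - y‖ ≤ (κ - ρ) * ‖ystar - z S‖ + (κ - ρ) * ‖z S - y‖ := by
    have := mul_le_mul_of_nonneg_left htri hμ.le
    linarith [this]
  have hrK : (κ - ρ) * ‖ystar - y‖ ≤ (κ - ρ) * ‖ystar - y‖ / ((k:ℝ) + 1) +
      (κ - ρ) * ‖z S - y‖ := by
    linarith [hst, hs2B, h2B]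
  have hhalf : (κ - ρ) * ‖ystar - y‖ / ((k:ℝ) + 1) ≤ (κ - ρ) * ‖ystar - y‖ / 2 := by
    rw [div_le_div_iff₀ hKpos two_pos]
    have h0 : 0 ≤ (κ - ρ) * ‖ystar - y‖ := by positivity
    nlinarith [h0]
  have hr2t : (κ - ρ) * ‖ystar - y‖ / 2 ≤ (κ - ρ) * ‖z S - y‖ := by linarith
  have hBK : ‖v S‖ * ((k:ℝ) + 1) ≤ (κ - ρ) * ‖ystar - y‖ / 2 := by
    have := mul_le_mul_of_nonneg_right hBr hKpos.le
    have e : (κ - ρ) * ‖ystar - y‖ / (2 * ((k:ℝ) + 1)) * ((k:ℝ) + 1)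
        = (κ - ρ) * ‖ystar - y‖ / 2 := by
      field_simp
    linarith [this]
  have hμκ : (κ - ρ) * ‖z S - y‖ ≤ κ * ‖z S - y‖ := by
    have := mul_le_mul_of_nonneg_right (by linarith : κ - ρ ≤ κ) (norm_nonneg (z S - y))
    linarith [this]
  linarith
end

section
/- (Outer-loop complexity of 4WD-Catalyst with adaptive smoothing, nonconvex case.) Let f : ℝ^p → ℝ be bounded below with infimum f*, and let (κ_k)_{k ≥ 1} be positive reals with κ_k ≤ κ_max for all k. Suppose sequences (x_k)_{k ≥ 0} and (x̄_k)_{k ≥ 1} in ℝ^p satisfy, for every k ≥ 1: (i) there exists v_k ∈ ∂(f_{κ_k}(·; x_{k−1}))(x̄_k) with ‖v_k‖ ≤ κ_k‖x̄_k − x_{k−1}‖; (ii) f(x̄_k) + (κ_k/2)‖x̄_k − x_{k−1}‖² ≤ f(x_{k−1}); (iii) f(x_k) ≤ f(x̄_k). Then for every integer N ≥ 1 there exist an index j with 1 ≤ j ≤ N and a subgradient w ∈ ∂f(x̄_j) such that ‖w‖² ≤ (8κ_max/N)·(f(x_0) − f*). -/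
open Filter Topology

lemma liminf_sub_nonneg {α : Type*} {F : Filter α} {A B : α → ℝ}
    (hB0 : ∀ᶠ y in F, 0 ≤ B y) (hBlim : Tendsto B F (nhds 0))
    (hA : 0 ≤ Filter.liminf A F) :
    0 ≤ Filter.liminf (fun y => A y - B y) F := by
  rw [Filter.liminf_eq] at hA ⊢
  set S : Set ℝ := {a | ∀ᶠ y in F, a ≤ A y} with hS
  set S' : Set ℝ := {a | ∀ᶠ y in F, a ≤ A y - B y} with hS'
  have hmem : ∀ a ∈ S, ∀ ε : ℝ, 0 < ε → a - ε ∈ S' := by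
    intro a ha ε hε
    have hB : ∀ᶠ y in F, B y < ε := hBlim.eventually (gt_mem_nhds hε)
    filter_upwards [ha, hB] with y h1 h2
    linarith
  by_cases hbdd : BddAbove S'
  · by_cases hne' : S'.Nonempty
    · have hneS : S.Nonempty := by
        obtain ⟨a, ha⟩ := hne'
        exact ⟨a, by filter_upwards [ha, hB0] with y h1 h2; linarith⟩
      have hSbdd : BddAbove S := by
        obtain ⟨M, hM⟩ := hbdd
        refine ⟨M + 1, fun a ha => ?_⟩
        have := hM (hmem a ha 1 one_pos)
        linarith
      have key : ∀ ε : ℝ, 0 < ε → -ε ≤ sSup S' := by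
        intro ε hε
        obtain ⟨a, haS, hagt⟩ := exists_lt_of_lt_csSup hneS
          (show sSup S - ε / 2 < sSup S by linarith)
        have h1 : a - ε / 2 ∈ S' := hmem a haS (ε / 2) (by linarith)
        have := le_csSup hbdd h1
        linarith
      by_contra h
      push_neg at h
      have := key (-(sSup S') / 2) (by linarith)
      linarith
    · rw [Set.not_nonempty_iff_eq_empty] at hne'
      rw [hne', Real.sSup_empty]
  · rw [Real.sSup_of_not_bddAbove hbdd]

lemma fsubgrad_shift {p : ℕ} (f : EuclideanSpace ℝ (Fin p) → ℝ)
    (c : ℝ) (hc : 0 ≤ c) (x₀ v xb : EuclideanSpace ℝ (Fin p))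
    (h : FSubgradAt (fun z => f z + c / 2 * ‖z - x₀‖ ^ 2) v xb) :
    FSubgradAt f (v - c • (xb - x₀)) xb := by
  unfold FSubgradAt at h ⊢
  have hident : ∀ y : EuclideanSpace ℝ (Fin p),
      (f y - f xb - (inner ℝ (v - c • (xb - x₀)) (y - xb) : ℝ)) / ‖y - xb‖
      = ((f y + c / 2 * ‖y - x₀‖ ^ 2) - (f xb + c / 2 * ‖xb - x₀‖ ^ 2)
          - (inner ℝ v (y - xb) : ℝ)) / ‖y - xb‖ - c / 2 * ‖y - xb‖ := by
    intro y
    have hexp : y - x₀ = (y - xb) + (xb - x₀) := by abel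
    have hnorm : ‖y - x₀‖ ^ 2 = ‖y - xb‖ ^ 2
        + 2 * (inner ℝ (y - xb) (xb - x₀) : ℝ) + ‖xb - x₀‖ ^ 2 := by
      rw [hexp, @norm_add_sq_real]
      try ring
    have hinner : (inner ℝ (v - c • (xb - x₀)) (y - xb) : ℝ)
        = (inner ℝ v (y - xb) : ℝ) - c * (inner ℝ (y - xb) (xb - x₀) : ℝ) := by
      rw [inner_sub_left, real_inner_smul_left, real_inner_comm (xb - x₀)]
    rcases eq_or_ne (‖y - xb‖) 0 with h0 | h0
    · rw [h0]; simp
    · rw [hinner, hnorm]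
      field_simp
      try ring
  have heq : (fun y => (f y - f xb - (inner ℝ (v - c • (xb - x₀)) (y - xb) : ℝ)) / ‖y - xb‖)
      = fun y => ((f y + c / 2 * ‖y - x₀‖ ^ 2) - (f xb + c / 2 * ‖xb - x₀‖ ^ 2)
          - (inner ℝ v (y - xb) : ℝ)) / ‖y - xb‖ - c / 2 * ‖y - xb‖ := funext hident
  rw [heq]
  apply liminf_sub_nonneg _ _ h
  · exact Filter.Eventually.of_forall fun y => by positivity
  · have : Tendsto (fun y : EuclideanSpace ℝ (Fin p) => c / 2 * ‖y - xb‖)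
        (nhds xb) (nhds (c / 2 * ‖xb - xb‖)) :=
      (continuous_const.mul (continuous_id.sub continuous_const).norm).tendsto xb
    simpa using this.mono_left nhdsWithin_le_nhds

/-- Outer-loop complexity of 4WD-Catalyst with adaptive smoothing,
nonconvex case. -/
theorem outer_loop_complexity_adaptive_nonconvex (p : ℕ) (hp : 0 < p)
    (f : EuclideanSpace ℝ (Fin p) → ℝ) (fstar : ℝ)
    (hinf : IsGLB (Set.range f) fstar)
    (κ : ℕ → ℝ) (κmax : ℝ)
    (hκpos : ∀ k : ℕ, 1 ≤ k → 0 < κ k)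
    (hκmax : ∀ k : ℕ, 1 ≤ k → κ k ≤ κmax)
    (x xbar : ℕ → EuclideanSpace ℝ (Fin p))
    (hstat : ∀ k : ℕ, 1 ≤ k → ∃ v : EuclideanSpace ℝ (Fin p),
      FSubgradAt (fun z => f z + κ k / 2 * ‖z - x (k - 1)‖ ^ 2) v (xbar k) ∧
        ‖v‖ ≤ κ k * ‖xbar k - x (k - 1)‖)
    (hdescent : ∀ k : ℕ, 1 ≤ k →
      f (xbar k) + κ k / 2 * ‖xbar k - x (k - 1)‖ ^ 2 ≤ f (x (k - 1)))
    (hbest : ∀ k : ℕ, 1 ≤ k → f (x k) ≤ f (xbar k)) :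
    ∀ N : ℕ, 1 ≤ N → ∃ j : ℕ, 1 ≤ j ∧ j ≤ N ∧
      ∃ w : EuclideanSpace ℝ (Fin p), FSubgradAt f w (xbar j) ∧
        ‖w‖ ^ 2 ≤ 8 * κmax / (N : ℝ) * (f (x 0) - fstar) := by
  intro N hN
  have hκm0 : (0:ℝ) < κmax := lt_of_lt_of_le (hκpos 1 le_rfl) (hκmax 1 le_rfl)
  -- pigeonhole: minimize g i := f (x i) - f (x (i+1)) over range N
  set g : ℕ → ℝ := fun i => f (x i) - f (x (i + 1)) with hg
  have hne : (Finset.range N).Nonempty := ⟨0, Finset.mem_range.mpr hN⟩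
  obtain ⟨i, hi, hmin⟩ := Finset.exists_min_image (Finset.range N) g hne
  have hiN : i < N := Finset.mem_range.mp hi
  have hsum : (N : ℝ) * g i ≤ f (x 0) - fstar := by
    have h1 : (Finset.range N).card • g i ≤ ∑ k ∈ Finset.range N, g k :=
      Finset.card_nsmul_le_sum _ _ _ fun k hk => hmin k hk
    rw [Finset.card_range, nsmul_eq_mul] at h1
    have h2 : ∑ k ∈ Finset.range N, g k = f (x 0) - f (x N) :=
      Finset.sum_range_sub' (fun k => f (x k)) N
    have h3 : fstar ≤ f (x N) := hinf.1 ⟨x N, rfl⟩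
    rw [h2] at h1
    linarith
  set j := i + 1 with hj
  have hj1 : 1 ≤ j := Nat.le_add_left 1 i
  have hji : j - 1 = i := Nat.succ_sub_one i
  refine ⟨j, hj1, hiN, ?_⟩
  obtain ⟨v, hv, hvn⟩ := hstat j hj1
  rw [hji] at hv hvn
  have hκj := hκpos j hj1
  refine ⟨v - κ j • (xbar j - x i),
    fsubgrad_shift f (κ j) hκj.le (x i) v (xbar j) hv, ?_⟩
  set d := ‖xbar j - x i‖ with hd
  have hd0 : 0 ≤ d := norm_nonneg _
  have hwn : ‖v - κ j • (xbar j - x i)‖ ≤ 2 * κ j * d := by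
    calc ‖v - κ j • (xbar j - x i)‖ ≤ ‖v‖ + ‖κ j • (xbar j - x i)‖ := norm_sub_le _ _
    _ = ‖v‖ + κ j * d := by rw [norm_smul, Real.norm_eq_abs, abs_of_pos hκj]
    _ ≤ 2 * κ j * d := by linarith
  have hwsq : ‖v - κ j • (xbar j - x i)‖ ^ 2 ≤ 4 * κ j ^ 2 * d ^ 2 := by
    have := pow_le_pow_left₀ (norm_nonneg _) hwn 2
    calc ‖v - κ j • (xbar j - x i)‖ ^ 2 ≤ (2 * κ j * d) ^ 2 := this
    _ = 4 * κ j ^ 2 * d ^ 2 := by ring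
  have hdesc := hdescent j hj1
  rw [hji] at hdesc
  have hb := hbest j hj1
  have hgi : κ j / 2 * d ^ 2 ≤ g i := by
    have : f (x j) ≤ f (xbar j) := hb
    simp only [hg]
    have hij : i + 1 = j := rfl
    rw [hij]
    linarith
  have hκjm := hκmax j hj1
  have hquad : 4 * κ j ^ 2 * d ^ 2 ≤ 8 * κmax * (κ j / 2 * d ^ 2) := by
    have h1 : 0 ≤ κ j / 2 * d ^ 2 := by positivity
    nlinarith
  have hN0 : (0:ℝ) < N := by exact_mod_cast hN
  calc ‖v - κ j • (xbar j - x i)‖ ^ 2 ≤ 8 * κmax * (κ j / 2 * d ^ 2) :=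
        le_trans hwsq hquad
  _ ≤ 8 * κmax * g i := by nlinarith
  _ ≤ 8 * κmax / (N : ℝ) * (f (x 0) - fstar) := by
      rw [div_mul_eq_mul_div, le_div_iff₀ hN0]
      nlinarith
end
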